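/- arXiv:2407.01382 — 7 statements merged into one kernel-verified Lean document; each statement's English description precedes it below -/
import Mathlib

section
/- Let η₀ be the tournament on [8] defined below, and let the eight brackets be π₁=(1,2,3,4,5,6,7,8), π₂=(2,3,4,1,6,7,8,5), π₃=(3,6,4,1,8,2,5,7), π₄=(4,1,8,2,5,6,7,3), π₅=(5,6,7,8,2,3,4,1), π₆=(6,7,8,5,1,2,3,4), π₇=(7,8,1,2,3,5,6,4), π₈=(8,1,5,6,2,3,7,4). Then for every k ∈ [8], the single-elimination winner satisfies w₃(η₀, π_k) = k; consequently w₃(η₀, Π(3)) = [8], i.e., every candidate in [8] wins the knockout tournament under η₀ for some bracket. -/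
/-- One knockout round: adjacent pairs play and the winners survive. -/
def roundStep (beats : ℕ → ℕ → Bool) : List ℕ → List ℕ
  | a :: b :: rest => (if beats a b then a else b) :: roundStep beats rest
  | l => l

/-- The winner of the single-elimination knockout tournament with bracket `π`
(a list of length `2^n`), pairwise challenges decided by `beats`. -/
def knockWinner (n : ℕ) (beats : ℕ → ℕ → Bool) (π : List ℕ) : ℕ :=
  ((roundStep beats)^[n] π).headI

/-- The arrows of the tournament `η₀` on `{1,…,8}`. -/
def eta0Pairs : List (ℕ × ℕ) :=
  [(1,2),(1,3),(1,5),(2,3),(2,4),(2,6),(2,7),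
   (3,4),(3,5),(3,6),(3,8),(4,1),(4,5),(4,8),
   (5,2),(5,6),(5,7),(6,1),(6,4),(6,7),(6,8),
   (7,1),(7,3),(7,4),(7,8),(8,1),(8,2),(8,5)]

/-- The tournament `η₀` on `{1,…,8}`: `eta0 i j = true` iff `i ▷ j`. -/
def eta0 (i j : ℕ) : Bool := decide ((i, j) ∈ eta0Pairs)

/-! Each of the eight explicit brackets is checked by evaluation. Conversely, a knockout
round only keeps players of the current list and never empties it, so the winner of any
bracket is one of its players; for a permutation of `[8]` this is a candidate in `[8]`. -/

theorem roundStep_subset (beats : ℕ → ℕ → Bool) : ∀ l : List ℕ, roundStep beats l ⊆ l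
  | a :: b :: rest => by
    intro x hx
    simp only [roundStep, List.mem_cons] at hx ⊢
    rcases hx with rfl | hx
    · split <;> simp
    · exact Or.inr (Or.inr (roundStep_subset beats rest hx))
  | [] => List.Subset.refl _
  | [_] => List.Subset.refl _

theorem roundStep_ne_nil (beats : ℕ → ℕ → Bool) :
    ∀ {l : List ℕ}, l ≠ [] → roundStep beats l ≠ []
  | _ :: _ :: _, _ => by simp [roundStep]
  | [_], _ => by simp [roundStep]

theorem iterate_roundStep_subset (beats : ℕ → ℕ → Bool) (n : ℕ) (l : List ℕ) :
    (roundStep beats)^[n] l ⊆ l := by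
  induction n generalizing l with
  | zero => exact List.Subset.refl l
  | succ n ih =>
    rw [Function.iterate_succ_apply]
    exact List.Subset.trans (ih _) (roundStep_subset beats l)

theorem iterate_roundStep_ne_nil (beats : ℕ → ℕ → Bool) (n : ℕ) {l : List ℕ} (hl : l ≠ []) :
    (roundStep beats)^[n] l ≠ [] := by
  induction n generalizing l with
  | zero => exact hl
  | succ n ih =>
    rw [Function.iterate_succ_apply]
    exact ih (roundStep_ne_nil beats hl)

theorem List.headI_mem {α : Type*} [Inhabited α] : ∀ {l : List α}, l ≠ [] → l.headI ∈ l
  | _ :: _, _ => List.mem_cons_self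

theorem knockWinner_mem (n : ℕ) (beats : ℕ → ℕ → Bool) {π : List ℕ} (hπ : π ≠ []) :
    knockWinner n beats π ∈ π :=
  iterate_roundStep_subset beats n π (List.headI_mem (iterate_roundStep_ne_nil beats n hπ))

theorem knockWinner_mem_of_perm (n : ℕ) (beats : ℕ → ℕ → Bool) {π σ : List ℕ} (hσ : σ ≠ [])
    (hπ : π.Perm σ) : knockWinner n beats π ∈ σ :=
  hπ.subset (knockWinner_mem n beats (fun h => hσ (List.Perm.eq_nil (h ▸ hπ.symm))))

theorem setOf_knockWinner_perm_eq (n : ℕ) (beats : ℕ → ℕ → Bool) {σ : List ℕ} (hσ : σ ≠ [])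
    (hwin : ∀ k ∈ σ, ∃ π : List ℕ, π.Perm σ ∧ knockWinner n beats π = k) :
    {w : ℕ | ∃ π : List ℕ, π.Perm σ ∧ knockWinner n beats π = w} = {k : ℕ | k ∈ σ} :=
  Set.Subset.antisymm (fun _ ⟨_, hπ, hw⟩ => hw ▸ knockWinner_mem_of_perm n beats hσ hπ) hwin

/-- Lemma 1: under `η₀`, each of the eight explicit brackets makes the corresponding
candidate win, and consequently every candidate in `{1,…,8}` is a possible knockout
winner: `w₃(η₀, Π(3)) = [8]`. -/
theorem stmt0 :
    knockWinner 3 eta0 [1,2,3,4,5,6,7,8] = 1 ∧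
    knockWinner 3 eta0 [2,3,4,1,6,7,8,5] = 2 ∧
    knockWinner 3 eta0 [3,6,4,1,8,2,5,7] = 3 ∧
    knockWinner 3 eta0 [4,1,8,2,5,6,7,3] = 4 ∧
    knockWinner 3 eta0 [5,6,7,8,2,3,4,1] = 5 ∧
    knockWinner 3 eta0 [6,7,8,5,1,2,3,4] = 6 ∧
    knockWinner 3 eta0 [7,8,1,2,3,5,6,4] = 7 ∧
    knockWinner 3 eta0 [8,1,5,6,2,3,7,4] = 8 ∧
    {w : ℕ | ∃ π : List ℕ, π.Perm (List.range' 1 8) ∧ knockWinner 3 eta0 π = w}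
      = {k : ℕ | k ∈ List.range' 1 8} := by
  obtain ⟨h1, h2, h3, h4, h5, h6, h7, h8⟩ :
      knockWinner 3 eta0 [1,2,3,4,5,6,7,8] = 1 ∧
      knockWinner 3 eta0 [2,3,4,1,6,7,8,5] = 2 ∧
      knockWinner 3 eta0 [3,6,4,1,8,2,5,7] = 3 ∧
      knockWinner 3 eta0 [4,1,8,2,5,6,7,3] = 4 ∧
      knockWinner 3 eta0 [5,6,7,8,2,3,4,1] = 5 ∧
      knockWinner 3 eta0 [6,7,8,5,1,2,3,4] = 6 ∧
      knockWinner 3 eta0 [7,8,1,2,3,5,6,4] = 7 ∧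
      knockWinner 3 eta0 [8,1,5,6,2,3,7,4] = 8 := by decide
  refine ⟨h1, h2, h3, h4, h5, h6, h7, h8, setOf_knockWinner_perm_eq 3 eta0 (by decide) ?_⟩
  intro k (hk : k ∈ [1,2,3,4,5,6,7,8])
  simp only [List.mem_cons, List.not_mem_nil, or_false] at hk
  rcases hk with rfl | rfl | rfl | rfl | rfl | rfl | rfl | rfl
  exacts [⟨_, by decide, h1⟩, ⟨_, by decide, h2⟩, ⟨_, by decide, h3⟩, ⟨_, by decide, h4⟩,
    ⟨_, by decide, h5⟩, ⟨_, by decide, h6⟩, ⟨_, by decide, h7⟩, ⟨_, by decide, h8⟩]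
end

section
/- Let c ≥ 2 be an integer and let G^(1), …, G^(c) be finite oriented graphs on pairwise disjoint vertex sets V^(1), …, V^(c), and let G be the oriented graph on the disjoint union of the V^(ℓ) whose arrow set is the disjoint union of the arrow sets (in particular G has no arrows between vertices of different V^(ℓ)). Suppose for each ℓ ∈ [c] there is a voting profile R^(ℓ) on V^(ℓ) with exactly 2r rows (the same even number for all ℓ) that generates G^(ℓ). Then there exists a voting profile R on the union vertex set, with exactly 2r rows, that generates G. -/
/-!
The `k`-th ballot of the merged profile concatenates the `k`-th ballots of the blocks, listing
the blocks in increasing order for the first `r` ballots and in decreasing order for the last `r`.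
Two candidates of the same block are then compared exactly as in that block's profile, while two
candidates of different blocks are ranked one way in `r` ballots and the other way in the other
`r`, so they are tied and carry no arrow.
-/

/-- `R` is a voting profile on the finite candidate set `V` that generates the oriented
graph with arrow relation `E`: every row of `R` is a permutation (linear order) of `V`
and, for distinct `i, j ∈ V`, there is an arrow from `i` to `j` iff strictly more rows
of `R` rank `i` before `j` than rank `j` before `i`. -/
def GeneratesOn {α : Type*} [DecidableEq α] (R : List (List α)) (V : Finset α)
    (E : α → α → Prop) : Prop :=
  (∀ ρ ∈ R, ρ.Nodup ∧ ρ.toFinset = V) ∧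
  ∀ i ∈ V, ∀ j ∈ V, i ≠ j →
    (E i j ↔ (R.filter fun ρ => decide (ρ.idxOf j < ρ.idxOf i)).length
      < (R.filter fun ρ => decide (ρ.idxOf i < ρ.idxOf j)).length)

namespace List

variable {α β : Type*} [DecidableEq α] {L : List β} {f : β → List α} {a b : β} {x y : α}

theorem idxOf_flatMap [DecidableEq β] (ha : a ∈ L) (hx : x ∈ f a)
    (hxa : ∀ c ∈ L, x ∈ f c → c = a) :
    (L.flatMap f).idxOf x = ((L.take (L.idxOf a)).flatMap f).length + (f a).idxOf x := by
  induction L with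
  | nil => cases ha
  | cons c L ih =>
    by_cases hca : c = a
    · subst hca
      simp [idxOf_append_of_mem hx]
    · have hxc : x ∉ f c := fun h => hca (hxa c mem_cons_self h)
      rw [flatMap_cons, idxOf_append_of_notMem hxc, idxOf_cons_ne _ hca, take_succ_cons,
        flatMap_cons, length_append,
        ih ((mem_cons.1 ha).resolve_left (Ne.symm hca)) fun c hc => hxa c (mem_cons_of_mem _ hc)]
      omega

theorem idxOf_flatMap_lt_of_idxOf_lt [DecidableEq β] (ha : a ∈ L) (hb : b ∈ L)
    (hx : x ∈ f a) (hy : y ∈ f b) (hxa : ∀ c ∈ L, x ∈ f c → c = a)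
    (hyb : ∀ c ∈ L, y ∈ f c → c = b) (hab : L.idxOf a < L.idxOf b) :
    (L.flatMap f).idxOf x < (L.flatMap f).idxOf y := by
  obtain ⟨n, hn⟩ := Nat.exists_eq_add_of_le hab
  rw [idxOf_flatMap ha hx hxa, idxOf_flatMap hb hy hyb, hn, take_add, take_add_one,
    getElem?_idxOf ha]
  simp only [Option.toList_some, flatMap_append, length_append, flatMap_singleton]
  have := idxOf_lt_length_of_mem hx
  omega

theorem idxOf_flatMap_lt_iff [DecidableEq β] (ha : a ∈ L) (hb : b ∈ L) (hab : a ≠ b)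
    (hx : x ∈ f a) (hy : y ∈ f b) (hxa : ∀ c ∈ L, x ∈ f c → c = a)
    (hyb : ∀ c ∈ L, y ∈ f c → c = b) :
    (L.flatMap f).idxOf x < (L.flatMap f).idxOf y ↔ L.idxOf a < L.idxOf b := by
  refine ⟨fun h => ?_, idxOf_flatMap_lt_of_idxOf_lt ha hb hx hy hxa hyb⟩
  have hne : L.idxOf a ≠ L.idxOf b := fun h' => hab ((idxOf_inj ha).1 h')
  by_contra hba
  have := idxOf_flatMap_lt_of_idxOf_lt hb ha hy hx hyb hxa (by omega)
  omega

theorem idxOf_flatMap_lt_iff_of_mem (ha : a ∈ L) (hx : x ∈ f a) (hy : y ∈ f a)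
    (hxa : ∀ c ∈ L, x ∈ f c → c = a) (hya : ∀ c ∈ L, y ∈ f c → c = a) :
    (L.flatMap f).idxOf x < (L.flatMap f).idxOf y ↔ (f a).idxOf x < (f a).idxOf y := by
  classical
  rw [idxOf_flatMap ha hx hxa, idxOf_flatMap ha hy hya, Nat.add_lt_add_iff_left]

theorem countP_eq_countP_range_getD (L : List β) (d : β) (p : β → Bool) :
    L.countP p = (range L.length).countP fun k => p (L.getD k d) := by
  have hL : (range L.length).map (L.getD · d) = L :=
    ext_getElem (by simp) fun k _ hk => by simp [getD_eq_getElem?_getD, hk]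
  conv_lhs => rw [← hL, countP_map]
  rfl

theorem idxOf_reverse_finRange {n : ℕ} (i : Fin n) : (finRange n).reverse.idxOf i = i.rev := by
  have := (nodup_reverse.2 (nodup_finRange n)).idxOf_getElem i.rev (by simpa using i.pos)
  have hi : (⟨n - 1 - (n - (i + 1)), by omega⟩ : Fin n) = i := by ext; simp; omega
  simpa [hi] using this

theorem countP_range_two_mul_lt (r : ℕ) :
    (range (2 * r)).countP (fun k => decide (k < r)) = r := by
  simp [countP_eq_length.2 fun k hk => decide_eq_true (mem_range.1 hk), two_mul, range_add,
    countP_append, countP_map, Function.comp_def]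

theorem countP_range_two_mul_le (r : ℕ) :
    (range (2 * r)).countP (fun k => decide (r ≤ k)) = r := by
  simp [two_mul, range_add, countP_append, countP_map, Function.comp_def]

end List

theorem Pairwise.eq_of_mem_of_mem {ι α : Type*} {V : ι → Finset α}
    (hV : Pairwise (Function.onFun Disjoint V)) {a b : ι} {x : α} (ha : x ∈ V a)
    (hb : x ∈ V b) : a = b :=
  by_contra fun hab => Finset.disjoint_left.1 (hV hab) ha hb

def IsVotingProfile {α : Type*} [DecidableEq α] (R : List (List α)) (V : Finset α) : Prop :=
  ∀ ρ ∈ R, ρ.Nodup ∧ ρ.toFinset = V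

section BlockBallot

open Finset Function

variable {ι α : Type*} [DecidableEq α] {R : ι → List (List α)} {V : ι → Finset α}
  {order : List ι} {l : ι} {k : ℕ} {x y : α}

def blockBallot (R : ι → List (List α)) (order : List ι) (k : ℕ) : List α :=
  order.flatMap fun l => (R l).getD k []

theorem mem_of_mem_getD (hR : ∀ l, IsVotingProfile (R l) (V l))
    (hx : x ∈ (R l).getD k []) : x ∈ V l := by
  rw [List.getD_eq_getElem?_getD] at hx
  cases hρ : (R l)[k]? with
  | none => simp [hρ] at hx
  | some ρ =>
    rw [hρ, Option.getD_some] at hx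
    rw [← (hR l ρ (List.mem_of_getElem? hρ)).2]
    exact List.mem_toFinset.2 hx

theorem mem_getD_of_mem (hR : ∀ l, IsVotingProfile (R l) (V l)) (hk : k < (R l).length)
    (hx : x ∈ V l) : x ∈ (R l).getD k [] := by
  rw [List.getD_eq_getElem?_getD, List.getElem?_eq_getElem hk, Option.getD_some,
    ← List.mem_toFinset, (hR l _ (List.getElem_mem hk)).2]
  exact hx

theorem nodup_getD (hR : ∀ l, IsVotingProfile (R l) (V l)) : ((R l).getD k []).Nodup := by
  rw [List.getD_eq_getElem?_getD]
  cases hρ : (R l)[k]? with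
  | none => exact List.nodup_nil
  | some ρ => exact (hR l ρ (List.mem_of_getElem? hρ)).1

theorem eq_of_mem_getD (hR : ∀ l, IsVotingProfile (R l) (V l)) (hV : Pairwise (Disjoint on V))
    {a b : ι} (hxa : x ∈ V a) (hxb : x ∈ (R b).getD k []) : b = a :=
  hV.eq_of_mem_of_mem (mem_of_mem_getD hR hxb) hxa

theorem nodup_blockBallot (hR : ∀ l, IsVotingProfile (R l) (V l))
    (hV : Pairwise (Disjoint on V)) (hord : order.Nodup) : (blockBallot R order k).Nodup := by
  refine List.nodup_flatMap.2 ⟨fun _ _ => nodup_getD hR, hord.imp fun hab x hxa hxb => ?_⟩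
  exact hab (eq_of_mem_getD hR hV (mem_of_mem_getD hR hxa) hxb).symm

theorem toFinset_blockBallot [Fintype ι] (hR : ∀ l, IsVotingProfile (R l) (V l))
    (hord : ∀ l, l ∈ order) (hk : ∀ l, k < (R l).length) :
    (blockBallot R order k).toFinset = univ.biUnion V := by
  ext x
  simp only [blockBallot, List.mem_toFinset, List.mem_flatMap, mem_biUnion, mem_univ, true_and]
  exact ⟨fun ⟨l, _, hx⟩ => ⟨l, mem_of_mem_getD hR hx⟩,
    fun ⟨l, hx⟩ => ⟨l, hord l, mem_getD_of_mem hR (hk l) hx⟩⟩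

theorem idxOf_blockBallot_lt_iff_of_mem (hR : ∀ l, IsVotingProfile (R l) (V l))
    (hV : Pairwise (Disjoint on V)) (hl : l ∈ order) (hk : k < (R l).length) (hx : x ∈ V l)
    (hy : y ∈ V l) :
    (blockBallot R order k).idxOf x < (blockBallot R order k).idxOf y ↔
      ((R l).getD k []).idxOf x < ((R l).getD k []).idxOf y :=
  List.idxOf_flatMap_lt_iff_of_mem hl (mem_getD_of_mem hR hk hx) (mem_getD_of_mem hR hk hy)
    (fun _ _ => eq_of_mem_getD hR hV hx) (fun _ _ => eq_of_mem_getD hR hV hy)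

theorem idxOf_blockBallot_lt_iff [DecidableEq ι] (hR : ∀ l, IsVotingProfile (R l) (V l))
    (hV : Pairwise (Disjoint on V)) {a b : ι} (ha : a ∈ order) (hb : b ∈ order) (hab : a ≠ b)
    (hka : k < (R a).length) (hkb : k < (R b).length) (hx : x ∈ V a) (hy : y ∈ V b) :
    (blockBallot R order k).idxOf x < (blockBallot R order k).idxOf y ↔
      order.idxOf a < order.idxOf b :=
  List.idxOf_flatMap_lt_iff ha hb hab (mem_getD_of_mem hR hka hx) (mem_getD_of_mem hR hkb hy)
    (fun _ _ => eq_of_mem_getD hR hV hx) (fun _ _ => eq_of_mem_getD hR hV hy)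

end BlockBallot

section MergedProfile

open Finset Function

def blockOrder (c r k : ℕ) : List (Fin c) :=
  if k < r then List.finRange c else (List.finRange c).reverse

variable {c r k : ℕ}

theorem mem_blockOrder (l : Fin c) : l ∈ blockOrder c r k := by
  unfold blockOrder
  split_ifs <;> simp

theorem nodup_blockOrder : (blockOrder c r k).Nodup := by
  unfold blockOrder
  split_ifs
  · exact List.nodup_finRange c
  · exact List.nodup_reverse.2 (List.nodup_finRange c)

theorem idxOf_blockOrder_lt_iff {a b : Fin c} (hab : a ≠ b) :
    (blockOrder c r k).idxOf a < (blockOrder c r k).idxOf b ↔ (k < r ↔ a < b) := by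
  unfold blockOrder
  split_ifs with hk
  · simp [hk]
  · simp only [List.idxOf_reverse_finRange, Fin.val_fin_lt, Fin.rev_lt_rev, hk, false_iff,
      not_lt]
    exact ⟨le_of_lt, fun h => lt_of_le_of_ne h hab.symm⟩

variable {α : Type*} [DecidableEq α] {R : Fin c → List (List α)} {V : Fin c → Finset α}

def mergedProfile (R : Fin c → List (List α)) (r : ℕ) : List (List α) :=
  (List.range (2 * r)).map fun k => blockBallot R (blockOrder c r k) k

theorem isVotingProfile_mergedProfile (hlen : ∀ l, (R l).length = 2 * r)
    (hR : ∀ l, IsVotingProfile (R l) (V l)) (hV : Pairwise (Disjoint on V)) :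
    IsVotingProfile (mergedProfile R r) (univ.biUnion V) := by
  intro ρ hρ
  obtain ⟨k, hk, rfl⟩ := List.mem_map.1 hρ
  exact ⟨nodup_blockBallot hR hV nodup_blockOrder,
    toFinset_blockBallot hR mem_blockOrder fun l => hlen l ▸ List.mem_range.1 hk⟩

theorem countP_mergedProfile_of_mem (hlen : ∀ l, (R l).length = 2 * r)
    (hR : ∀ l, IsVotingProfile (R l) (V l)) (hV : Pairwise (Disjoint on V))
    {l : Fin c} {x y : α} (hx : x ∈ V l) (hy : y ∈ V l) :
    (mergedProfile R r).countP (fun ρ => decide (ρ.idxOf x < ρ.idxOf y)) =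
      (R l).countP fun ρ => decide (ρ.idxOf x < ρ.idxOf y) := by
  rw [mergedProfile, List.countP_map, List.countP_eq_countP_range_getD (R l) [], hlen l]
  refine List.countP_congr fun k hk => ?_
  simp only [comp_apply, decide_eq_true_iff]
  exact idxOf_blockBallot_lt_iff_of_mem hR hV (mem_blockOrder l)
    (hlen l ▸ List.mem_range.1 hk) hx hy

theorem countP_mergedProfile (hlen : ∀ l, (R l).length = 2 * r)
    (hR : ∀ l, IsVotingProfile (R l) (V l)) (hV : Pairwise (Disjoint on V))
    {a b : Fin c} (hab : a ≠ b) {x y : α} (hx : x ∈ V a) (hy : y ∈ V b) :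
    (mergedProfile R r).countP (fun ρ => decide (ρ.idxOf x < ρ.idxOf y)) = r := by
  have hprec : ∀ k < 2 * r, (blockBallot R (blockOrder c r k) k).idxOf x <
      (blockBallot R (blockOrder c r k) k).idxOf y ↔ (k < r ↔ a < b) := fun k hk => by
    rw [idxOf_blockBallot_lt_iff hR hV (mem_blockOrder a) (mem_blockOrder b) hab
      (hlen a ▸ hk) (hlen b ▸ hk) hx hy, idxOf_blockOrder_lt_iff hab]
  rw [mergedProfile, List.countP_map]
  rcases lt_or_gt_of_ne hab with hlt | hgt
  · refine (List.countP_congr fun k hk => ?_).trans (List.countP_range_two_mul_lt r)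
    simp [hprec k (List.mem_range.1 hk), hlt]
  · refine (List.countP_congr fun k hk => ?_).trans (List.countP_range_two_mul_le r)
    simp [hprec k (List.mem_range.1 hk), hgt.not_gt]

end MergedProfile

theorem stmt4_general {α : Type*} [DecidableEq α] (c r : ℕ)
    (V : Fin c → Finset α)
    (hdisj : ∀ l l' : Fin c, l ≠ l' → Disjoint (V l) (V l'))
    (E : Fin c → α → α → Prop)
    (hE : ∀ l i j, E l i j → i ∈ V l ∧ j ∈ V l)
    (R : Fin c → List (List α))
    (hlen : ∀ l, (R l).length = 2 * r)
    (hgen : ∀ l, GeneratesOn (R l) (V l) (E l)) :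
    ∃ S : List (List α), S.length = 2 * r ∧
      GeneratesOn S (Finset.univ.biUnion V) (fun i j => ∃ l, E l i j) := by
  have hV : Pairwise (Function.onFun Disjoint V) := fun l l' => hdisj l l'
  have hR l : IsVotingProfile (R l) (V l) := (hgen l).1
  refine ⟨mergedProfile R r, by simp [mergedProfile],
    isVotingProfile_mergedProfile hlen hR hV, ?_⟩
  intro i hi j hj hij
  obtain ⟨a, -, hia⟩ := Finset.mem_biUnion.1 hi
  obtain ⟨b, -, hjb⟩ := Finset.mem_biUnion.1 hj
  have hblock {l} (hl : E l i j) : l = a ∧ l = b :=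
    ⟨hV.eq_of_mem_of_mem (hE l i j hl).1 hia, hV.eq_of_mem_of_mem (hE l i j hl).2 hjb⟩
  simp only [← List.countP_eq_length_filter]
  rcases eq_or_ne a b with rfl | hab
  · have hEa : (∃ l, E l i j) ↔ E a i j :=
      ⟨fun ⟨l, hl⟩ => (hblock hl).1 ▸ hl, fun h => ⟨a, h⟩⟩
    rw [hEa, countP_mergedProfile_of_mem hlen hR hV hjb hia,
      countP_mergedProfile_of_mem hlen hR hV hia hjb]
    simpa only [← List.countP_eq_length_filter] using (hgen a).2 i hia j hjb hij
  · rw [countP_mergedProfile hlen hR hV hab.symm hjb hia,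
      countP_mergedProfile hlen hR hV hab hia hjb]
    exact iff_of_false (fun ⟨l, hl⟩ => hab ((hblock hl).1.symm.trans (hblock hl).2))
      (lt_irrefl r)

/-- Lemma 2: if the oriented graphs `G⁽¹⁾,…,G⁽ᶜ⁾` (`c ≥ 2`) live on pairwise disjoint
vertex sets and each `G⁽ˡ⁾` is generated by a voting profile `R⁽ˡ⁾` with the same even
number `2r` of rows, then the disjoint-union graph (with no arrows between different
pieces) is generated by a voting profile with `2r` rows on the union of the vertex sets. -/
theorem stmt4 {α : Type*} [DecidableEq α] (c r : ℕ) (hc : 2 ≤ c) (hr : 0 < r)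
    (V : Fin c → Finset α)
    (hdisj : ∀ l l' : Fin c, l ≠ l' → Disjoint (V l) (V l'))
    (E : Fin c → α → α → Prop)
    (hE : ∀ l i j, E l i j → i ∈ V l ∧ j ∈ V l)
    (R : Fin c → List (List α))
    (hlen : ∀ l, (R l).length = 2 * r)
    (hgen : ∀ l, GeneratesOn (R l) (V l) (E l)) :
    ∃ S : List (List α), S.length = 2 * r ∧
      GeneratesOn S (Finset.univ.biUnion V) (fun i j => ∃ l, E l i j) :=
  stmt4_general c r V hdisj E hE R hlen hgen
end

section
/- For every n ∈ ℕ₀, the recursively constructed voting profile R_n on [2^{n+3}] has exactly 4n+10 rows and generates the tournament η_n; moreover the voting profile R̃_n obtained from R_n by deleting its last row (so with 4n+9 rows) also generates η_n. -/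
/-- The recursively defined tournaments: `eta n` is the tournament `η_n` on
`{1,…,2^(n+3)}`, `eta n i j = true` meaning `i ▷ j`. -/
def eta : ℕ → ℕ → ℕ → Bool
  | 0, i, j => eta0 i j
  | n+1, i, j =>
    if i ≤ 2^(n+3) ∧ j ≤ 2^(n+3) then eta n i j
    else if 2^(n+3) < i ∧ 2^(n+3) < j then eta n (i - 2^(n+3)) (j - 2^(n+3))
    else if i ≤ 2^(n+3) then decide ((i + j) % 2 = 0)
    else decide ((i + j) % 2 = 1)

/-- Number of rows (preference lists) of the voting profile `R` ranking `i` before `j`. -/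
def prefCount (R : List (List ℕ)) (i j : ℕ) : ℕ :=
  (R.filter fun ρ => decide (ρ.idxOf i < ρ.idxOf j)).length

/-- `R` is a voting profile on the candidate set `{1,…,m}` generating the tournament `η`:
every row is a permutation of `{1,…,m}` and, for distinct candidates `i,j`, `i ▷ j`
holds iff strictly more rows rank `i` before `j` than rank `j` before `i`. -/
def Generates (R : List (List ℕ)) (m : ℕ) (η : ℕ → ℕ → Bool) : Prop :=
  (∀ ρ ∈ R, ρ.Perm (List.range' 1 m)) ∧
  ∀ i ∈ List.range' 1 m, ∀ j ∈ List.range' 1 m, i ≠ j →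
    (η i j = true ↔ prefCount R j i < prefCount R i j)

/-- Stearns' ten-row voting profile `R₀` on `{1,…,8}`. -/
def R0 : List (List ℕ) :=
  [[8,1,5,2,3,4,6,7],[2,7,6,4,1,3,5,8],[2,7,3,6,4,5,8,1],[4,1,3,8,5,6,7,2],
   [3,5,2,6,7,1,4,8],[6,8,4,1,5,7,2,3],[6,7,3,4,8,1,2,5],[8,5,2,7,1,4,3,6],
   [7,8,5,6,3,4,1,2],[1,2,3,4,5,6,7,8]]

/-- The increasing list of the odd elements of `{1,…,2^(n+2)}`. -/
def Aodd (n : ℕ) : List ℕ := (List.range (2^(n+1))).map fun t => 2*t+1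

/-- The increasing list of the even elements of `{1,…,2^(n+2)}`. -/
def Aeven (n : ℕ) : List ℕ := (List.range (2^(n+1))).map fun t => 2*t+2

/-- The increasing list of the odd elements of `{2^(n+2)+1,…,2^(n+3)}`. -/
def Bodd (n : ℕ) : List ℕ := (Aodd n).map (· + 2^(n+2))

/-- The increasing list of the even elements of `{2^(n+2)+1,…,2^(n+3)}`. -/
def Beven (n : ℕ) : List ℕ := (Aeven n).map (· + 2^(n+2))

/-- The preference list `v₁ = (A₁, B₁, A₂, B₂)` on `{1,…,2^(n+3)}`. -/
def v1 (n : ℕ) : List ℕ := Aodd n ++ Bodd n ++ Aeven n ++ Beven n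

/-- The preference list `v₂ = (Ā₂, B̄₂, Ā₁, B̄₁)` on `{1,…,2^(n+3)}`. -/
def v2 (n : ℕ) : List ℕ :=
  (Aeven n).reverse ++ (Beven n).reverse ++ (Aodd n).reverse ++ (Bodd n).reverse

/-- The preference list `v₃ = (B₁, A₂, B₂, A₁)` on `{1,…,2^(n+3)}`. -/
def v3 (n : ℕ) : List ℕ := Bodd n ++ Aeven n ++ Beven n ++ Aodd n

/-- The preference list `v₄ = (B̄₂, Ā₁, B̄₁, Ā₂)` on `{1,…,2^(n+3)}`. -/
def v4 (n : ℕ) : List ℕ :=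
  (Beven n).reverse ++ (Aodd n).reverse ++ (Bodd n).reverse ++ (Aeven n).reverse

/-- `bowtie P Q`: the voting profile whose `s`-th row (1-based) is the concatenation
`P_s ++ Q_s` when `s` is odd and `Q_s ++ P_s` when `s` is even. -/
def bowtie (P Q : List (List ℕ)) : List (List ℕ) :=
  ((P.zip Q).zipIdx.map Prod.swap).map fun p => if p.1 % 2 = 0 then p.2.1 ++ p.2.2 else p.2.2 ++ p.2.1

/-- The recursively constructed voting profile `R_n` on `{1,…,2^(n+3)}`:
`R_n = (v₁, v₂, v₃, v₄, R_{n-1} ⋈ (R_{n-1} + 2^(n+2)·𝟙))_V`. -/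
def Rprofile : ℕ → List (List ℕ)
  | 0 => R0
  | n+1 =>
    v1 (n+1) :: v2 (n+1) :: v3 (n+1) :: v4 (n+1) ::
      bowtie (Rprofile n) ((Rprofile n).map fun ρ => ρ.map (· + 2^(n+3)))

/-!
Inside each half `{1,…,2^(n+2)}` and `{2^(n+2)+1,…,2^(n+3)}`, every row of
`R_{n-1} ⋈ (R_{n-1} + 2^(n+2)·𝟙)` orders two candidates as the corresponding row of `R_{n-1}`
orders them (after the shift), while the rows `v₁, …, v₄` split every such pair `2 : 2`; so
the majorities of `η_{n-1}` are inherited. For a lower candidate `i` and an upper candidate `j`,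
the bowtie rows put `i` first exactly in the odd-numbered rows, a margin of at most one, and
`v₁, …, v₄` put `i` first three times or once according as `i + j` is even or odd, which
decides the pair as `η_n` prescribes. Nothing depends on the number of rows of `R_{n-1}`, so the
same induction runs for the profiles with their last row deleted.
-/

open List

namespace List

variable {α : Type*}

section idxOf

variable [DecidableEq α]

theorem idxOf_lt_idxOf_iff_of_pairwise {β : Type*} [LinearOrder β] {f : α → β} {l : List α}
    (hl : l.Pairwise (f · < f ·)) {a b : α} (ha : a ∈ l) (hb : b ∈ l) :
    l.idxOf a < l.idxOf b ↔ f a < f b := by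
  have ha' := idxOf_lt_length_iff.2 ha
  have hb' := idxOf_lt_length_iff.2 hb
  have hlt {x y : ℕ} (hx : x < l.length) (hy : y < l.length) (hxy : x < y) : f l[x] < f l[y] :=
    pairwise_iff_getElem.1 hl x y hx hy hxy
  refine ⟨fun h => by simpa [getElem_idxOf] using hlt ha' hb' h, fun h => ?_⟩
  rcases lt_trichotomy (l.idxOf a) (l.idxOf b) with h' | h' | h'
  · exact h'
  · exact absurd h ((idxOf_inj ha).1 h' ▸ lt_irrefl _)
  · have hba := hlt hb' ha' h'
    simp only [getElem_idxOf] at hba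
    exact absurd h hba.asymm

theorem idxOf_append_lt_idxOf_append_iff_left {l₁ l₂ : List α} {a b : α} (ha : a ∈ l₁)
    (hb : b ∈ l₁) : (l₁ ++ l₂).idxOf a < (l₁ ++ l₂).idxOf b ↔ l₁.idxOf a < l₁.idxOf b := by
  rw [idxOf_append_of_mem ha, idxOf_append_of_mem hb]

theorem idxOf_append_lt_idxOf_append_iff_right {l₁ l₂ : List α} {a b : α} (ha : a ∉ l₁)
    (hb : b ∉ l₁) : (l₁ ++ l₂).idxOf a < (l₁ ++ l₂).idxOf b ↔ l₂.idxOf a < l₂.idxOf b := by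
  rw [idxOf_append_of_notMem ha, idxOf_append_of_notMem hb, Nat.add_lt_add_iff_left]

theorem idxOf_append_lt_idxOf_append {l₁ l₂ : List α} {a b : α} (ha : a ∈ l₁) (hb : b ∉ l₁) :
    (l₁ ++ l₂).idxOf a < (l₁ ++ l₂).idxOf b := by
  rw [idxOf_append_of_mem ha, idxOf_append_of_notMem hb]
  exact (idxOf_lt_length_iff.2 ha).trans_le (Nat.le_add_right _ _)

theorem idxOf_map_of_injective {β : Type*} [DecidableEq β] {f : α → β}
    (hf : Function.Injective f) (l : List α) (a : α) : (l.map f).idxOf (f a) = l.idxOf a := by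
  induction l with
  | nil => rfl
  | cons x l ih => simp [idxOf_cons, hf.eq_iff, ih, Bool.cond_eq_ite]

end idxOf

theorem pairwise_map_range_iff {R : ℕ → ℕ → Prop} {f : ℕ → ℕ} {n : ℕ} :
    ((range n).map f).Pairwise R ↔ ∀ a b, a < b → b < n → R (f a) (f b) := by
  rw [pairwise_map, pairwise_iff_getElem]
  simp only [length_range, getElem_range]
  exact ⟨fun h a b hab hb => h a b (by omega) hb hab, fun h a b _ hb hab => h a b hab hb⟩

theorem perm_range'_of_nodup {l : List ℕ} {s n : ℕ} (hl : l.Nodup) (hlen : n ≤ l.length)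
    (hmem : ∀ x ∈ l, s ≤ x ∧ x < s + n) : l ~ range' s n :=
  (hl.subperm fun x hx => mem_range'_1.2 (hmem x hx)).perm_of_length_le (by simpa using hlen)

theorem countP_zipIdx_fst (l : List α) (p : α → Bool) :
    l.zipIdx.countP (fun x => p x.1) = l.countP p := by
  conv_rhs => rw [← zipIdx_map_fst 0 l, countP_map]
  rfl

theorem countP_zipIdx_snd (l : List α) (p : ℕ → Bool) :
    l.zipIdx.countP (fun x => p x.2) = (range l.length).countP p := by
  rw [range_eq_range', ← zipIdx_map_snd 0 l, countP_map]
  rfl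

theorem countP_mod_two_eq_zero_range (n : ℕ) :
    (range n).countP (fun s => s % 2 = 0) = (n + 1) / 2 := by
  induction n with
  | zero => rfl
  | succ n ih =>
    rw [range_succ, countP_append, ih]
    rcases Nat.mod_two_eq_zero_or_one n with h | h
    · simp only [h, decide_true, countP_cons_of_pos, countP_nil]
      omega
    · simp only [h, one_ne_zero, decide_false, Bool.false_eq_true, not_false_eq_true,
        countP_cons_of_neg, countP_nil]
      omega

theorem mem_range'_one_add_self {x m : ℕ} (hx : x ∈ range' 1 (m + m)) :
    x ∈ range' 1 m ∨ ∃ y ∈ range' 1 m, y + m = x := by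
  simp only [mem_range'_1] at hx ⊢
  by_cases h : x ≤ m
  · exact .inl (by omega)
  · exact .inr ⟨x - m, by omega, by omega⟩

end List

section prefCount

variable {R : List (List ℕ)} {i j : ℕ}

lemma prefCount_eq_countP (R : List (List ℕ)) (i j : ℕ) :
    prefCount R i j = R.countP fun ρ => ρ.idxOf i < ρ.idxOf j :=
  countP_eq_length_filter.symm

lemma prefCount_append (R S : List (List ℕ)) (i j : ℕ) :
    prefCount (R ++ S) i j = prefCount R i j + prefCount S i j := by
  simp only [prefCount_eq_countP, countP_append]

lemma prefCount_cons (ρ : List ℕ) (R : List (List ℕ)) (i j : ℕ) :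
    prefCount (ρ :: R) i j = (if ρ.idxOf i < ρ.idxOf j then 1 else 0) + prefCount R i j := by
  simp only [prefCount_eq_countP, countP_cons, decide_eq_true_eq]
  omega

lemma prefCount_add_prefCount_swap (hij : i ≠ j) (hi : ∀ ρ ∈ R, i ∈ ρ) :
    prefCount R i j + prefCount R j i = R.length := by
  rw [length_eq_countP_add_countP (fun ρ => ρ.idxOf i < ρ.idxOf j), prefCount_eq_countP,
    prefCount_eq_countP]
  congr 1
  refine countP_congr fun ρ hρ => ?_
  have hne : ρ.idxOf i ≠ ρ.idxOf j := fun h => hij ((idxOf_inj (hi ρ hρ)).1 h)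
  simp only [decide_eq_true_eq, not_lt]
  omega

end prefCount

section fourRows

variable {k i j : ℕ}

/-- Numbers the blocks `A₁, B₁, A₂, B₂` as `0, 1, 2, 3`. The rows `v₁, v₂, v₃, v₄` list the
blocks cyclically from block `0, 2, 1, 3`, increasing inside the blocks in `v₁, v₃` and
decreasing in `v₂, v₄`: they are sorted by `rowKey k c desc` with `c = 0, 2, 3, 1`. Two
candidates in different blocks at cyclic distance `d` are therefore ordered the same way by
exactly `4 - d` of the four rows, whence the splits `2 : 2` and `3 : 1`. -/
def block (k i : ℕ) : ℕ := (if i % 2 = 1 then 0 else 2) + if i ≤ 2 ^ (k + 2) then 0 else 1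

def rowKey (k c : ℕ) (desc : Bool) (i : ℕ) : ℕ ×ₗ ℕ :=
  toLex ((block k i + c) % 4, if desc then 2 ^ (k + 3) - i else i)

def vRows (k : ℕ) : List (List ℕ) := [v1 k, v2 k, v3 k, v4 k]

lemma two_pow_add_two_and_add_three (k : ℕ) :
    2 ^ (k + 2) = 2 * 2 ^ (k + 1) ∧ 2 ^ (k + 3) = 4 * 2 ^ (k + 1) := by
  constructor <;> ring

lemma v1_pairwise (k : ℕ) : (v1 k).Pairwise (rowKey k 0 false · < rowKey k 0 false ·) := by
  have := two_pow_add_two_and_add_three k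
  simp only [v1, Aodd, Bodd, Aeven, Beven, map_map, pairwise_append, mem_append, mem_map,
    mem_range, pairwise_map_range_iff, Function.comp_apply, or_imp, forall_and,
    forall_exists_index, and_imp, forall_apply_eq_imp_iff₂, rowKey, block,
    Prod.Lex.toLex_lt_toLex, Bool.false_eq_true, if_false]
  and_intros <;> intros <;> split_ifs <;> omega

lemma v2_pairwise (k : ℕ) : (v2 k).Pairwise (rowKey k 2 true · < rowKey k 2 true ·) := by
  have := two_pow_add_two_and_add_three k
  simp only [v2, Aodd, Bodd, Aeven, Beven, map_map, pairwise_append, pairwise_reverse,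
    mem_append, mem_reverse, mem_map, mem_range, pairwise_map_range_iff, Function.comp_apply,
    or_imp, forall_and, forall_exists_index, and_imp, forall_apply_eq_imp_iff₂, rowKey, block,
    Prod.Lex.toLex_lt_toLex, if_true]
  and_intros <;> intros <;> split_ifs <;> omega

lemma v3_pairwise (k : ℕ) : (v3 k).Pairwise (rowKey k 3 false · < rowKey k 3 false ·) := by
  have := two_pow_add_two_and_add_three k
  simp only [v3, Aodd, Bodd, Aeven, Beven, map_map, pairwise_append, mem_append, mem_map,
    mem_range, pairwise_map_range_iff, Function.comp_apply, or_imp, forall_and,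
    forall_exists_index, and_imp, forall_apply_eq_imp_iff₂, rowKey, block,
    Prod.Lex.toLex_lt_toLex, Bool.false_eq_true, if_false]
  and_intros <;> intros <;> split_ifs <;> omega

lemma v4_pairwise (k : ℕ) : (v4 k).Pairwise (rowKey k 1 true · < rowKey k 1 true ·) := by
  have := two_pow_add_two_and_add_three k
  simp only [v4, Aodd, Bodd, Aeven, Beven, map_map, pairwise_append, pairwise_reverse,
    mem_append, mem_reverse, mem_map, mem_range, pairwise_map_range_iff, Function.comp_apply,
    or_imp, forall_and, forall_exists_index, and_imp, forall_apply_eq_imp_iff₂, rowKey, block,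
    Prod.Lex.toLex_lt_toLex, if_true]
  and_intros <;> intros <;> split_ifs <;> omega

lemma v1_perm (k : ℕ) : v1 k ~ range' 1 (2 ^ (k + 3)) := by
  have := two_pow_add_two_and_add_three k
  refine perm_range'_of_nodup ((v1_pairwise k).imp fun h => ne_of_apply_ne _ h.ne) ?_ ?_
  · simp only [v1, Aodd, Bodd, Aeven, Beven, length_append, length_map, length_range]
    omega
  · simp only [v1, Aodd, Bodd, Aeven, Beven, map_map, mem_append, mem_map, mem_range,
      Function.comp_apply, or_imp, forall_and, forall_exists_index, and_imp,
      forall_apply_eq_imp_iff₂]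
    and_intros <;> intros <;> omega

lemma v2_perm (k : ℕ) : v2 k ~ v1 k := by
  simp only [v1, v2, append_assoc, perm_iff_count, count_append, count_reverse]
  omega

lemma v3_perm (k : ℕ) : v3 k ~ v1 k := by
  simp only [v1, v3, append_assoc, perm_iff_count, count_append]
  omega

lemma v4_perm (k : ℕ) : v4 k ~ v1 k := by
  simp only [v1, v4, append_assoc, perm_iff_count, count_append, count_reverse]
  omega

lemma perm_of_mem_vRows {ρ : List ℕ} (hρ : ρ ∈ vRows k) : ρ ~ range' 1 (2 ^ (k + 3)) := by
  simp only [vRows, mem_cons, not_mem_nil, or_false] at hρ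
  rcases hρ with rfl | rfl | rfl | rfl
  exacts [v1_perm k, (v2_perm k).trans (v1_perm k), (v3_perm k).trans (v1_perm k),
    (v4_perm k).trans (v1_perm k)]

lemma prefCount_vRows (hi : i ∈ range' 1 (2 ^ (k + 3))) (hj : j ∈ range' 1 (2 ^ (k + 3))) :
    prefCount (vRows k) i j =
      (if rowKey k 0 false i < rowKey k 0 false j then 1 else 0) +
      ((if rowKey k 2 true i < rowKey k 2 true j then 1 else 0) +
      ((if rowKey k 3 false i < rowKey k 3 false j then 1 else 0) +
      (if rowKey k 1 true i < rowKey k 1 true j then 1 else 0))) := by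
  have hmem {ρ : List ℕ} (hρ : ρ ∈ vRows k) {x : ℕ} (hx : x ∈ range' 1 (2 ^ (k + 3))) :
      x ∈ ρ :=
    (perm_of_mem_vRows hρ).mem_iff.2 hx
  simp only [vRows, prefCount_cons] at hmem ⊢
  simp only [idxOf_lt_idxOf_iff_of_pairwise (v1_pairwise k) (hmem (by simp) hi) (hmem (by simp) hj),
    idxOf_lt_idxOf_iff_of_pairwise (v2_pairwise k) (hmem (by simp) hi) (hmem (by simp) hj),
    idxOf_lt_idxOf_iff_of_pairwise (v3_pairwise k) (hmem (by simp) hi) (hmem (by simp) hj),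
    idxOf_lt_idxOf_iff_of_pairwise (v4_pairwise k) (hmem (by simp) hi) (hmem (by simp) hj)]
  rfl

lemma prefCount_vRows_of_mem (hi : i ∈ range' 1 (2 ^ (k + 2))) (hj : j ∈ range' 1 (2 ^ (k + 2)))
    (hij : i ≠ j) : prefCount (vRows k) i j = 2 := by
  have := two_pow_add_two_and_add_three k
  rw [mem_range'_1] at hi hj
  rw [prefCount_vRows (mem_range'_1.2 (by omega)) (mem_range'_1.2 (by omega))]
  have hiH : i ≤ 2 ^ (k + 2) := by omega
  have hjH : j ≤ 2 ^ (k + 2) := by omega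
  rcases Nat.mod_two_eq_zero_or_one i with hpi | hpi <;>
    rcases Nat.mod_two_eq_zero_or_one j with hpj | hpj <;>
    simp [rowKey, block, hpi, hpj, hiH, hjH, Prod.Lex.toLex_lt_toLex] <;> split_ifs <;> omega

lemma prefCount_vRows_add_add (hi : i ∈ range' 1 (2 ^ (k + 2)))
    (hj : j ∈ range' 1 (2 ^ (k + 2))) (hij : i ≠ j) :
    prefCount (vRows k) (i + 2 ^ (k + 2)) (j + 2 ^ (k + 2)) = 2 := by
  have := two_pow_add_two_and_add_three k
  rw [mem_range'_1] at hi hj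
  rw [prefCount_vRows (mem_range'_1.2 (by omega)) (mem_range'_1.2 (by omega))]
  have hiH : ¬i + 2 ^ (k + 2) ≤ 2 ^ (k + 2) := by omega
  have hjH : ¬j + 2 ^ (k + 2) ≤ 2 ^ (k + 2) := by omega
  have hpi' : (i + 2 ^ (k + 2)) % 2 = i % 2 := by omega
  have hpj' : (j + 2 ^ (k + 2)) % 2 = j % 2 := by omega
  rcases Nat.mod_two_eq_zero_or_one i with hpi | hpi <;>
    rcases Nat.mod_two_eq_zero_or_one j with hpj | hpj <;>
    simp [rowKey, block, hpi, hpj, hpi', hpj', hiH, hjH, Prod.Lex.toLex_lt_toLex] <;>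
    split_ifs <;> omega

lemma prefCount_vRows_add_right (hi : i ∈ range' 1 (2 ^ (k + 2)))
    (hj : j ∈ range' 1 (2 ^ (k + 2))) :
    prefCount (vRows k) i (j + 2 ^ (k + 2)) = if (i + j) % 2 = 0 then 3 else 1 := by
  have := two_pow_add_two_and_add_three k
  rw [mem_range'_1] at hi hj
  rw [prefCount_vRows (mem_range'_1.2 (by omega)) (mem_range'_1.2 (by omega))]
  have hiH : i ≤ 2 ^ (k + 2) := by omega
  have hjH : ¬j + 2 ^ (k + 2) ≤ 2 ^ (k + 2) := by omega
  have hpj' : (j + 2 ^ (k + 2)) % 2 = j % 2 := by omega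
  rcases Nat.mod_two_eq_zero_or_one i with hpi | hpi <;>
    rcases Nat.mod_two_eq_zero_or_one j with hpj | hpj <;>
    simp [rowKey, block, hpi, hpj, hpj', hiH, hjH, Prod.Lex.toLex_lt_toLex, Nat.add_mod]

end fourRows

section bowtie

variable {m i j : ℕ} {ρ : List ℕ} {P : List (List ℕ)}

def bowtieRow (m : ℕ) (ρ : List ℕ) (s : ℕ) : List ℕ :=
  if s % 2 = 0 then ρ ++ ρ.map (· + m) else ρ.map (· + m) ++ ρ

lemma bowtie_map_add (P : List (List ℕ)) (m : ℕ) :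
    bowtie P (P.map fun ρ => ρ.map (· + m)) = P.zipIdx.map fun p => bowtieRow m p.1 p.2 := by
  have hzip : P.zip (P.map fun ρ => ρ.map (· + m)) = P.map fun ρ => (ρ, ρ.map (· + m)) := by
    simpa using zip_map' (f := id) (g := fun ρ => ρ.map (· + m)) (l := P)
  rw [bowtie, hzip, zipIdx_map, map_map, map_map]
  rfl

lemma bowtieRow_perm (hρ : ρ ~ range' 1 m) (s : ℕ) : bowtieRow m ρ s ~ range' 1 (m + m) := by
  have hshift : ρ.map (· + m) ~ range' (1 + m) m := by
    simpa [Nat.add_comm _ m, map_add_range'] using hρ.map (· + m)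
  have h : ρ ++ ρ.map (· + m) ~ range' 1 (m + m) :=
    (hρ.append hshift).trans (Perm.of_eq range'_append_1)
  unfold bowtieRow
  split_ifs
  exacts [h, perm_append_comm.trans h]

lemma notMem_map_add_of_perm_range' (hρ : ρ ~ range' 1 m) (hi : i ∈ range' 1 m) :
    i ∉ ρ.map (· + m) := by
  simp only [mem_map, not_exists, not_and]
  intro a ha
  rw [hρ.mem_iff, mem_range'_1] at ha
  rw [mem_range'_1] at hi
  omega

lemma add_notMem_of_perm_range' (hρ : ρ ~ range' 1 m) (hi : i ∈ range' 1 m) : i + m ∉ ρ := by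
  rw [hρ.mem_iff, mem_range'_1] at ⊢
  rw [mem_range'_1] at hi
  omega

lemma idxOf_lt_idxOf_bowtieRow_iff (hρ : ρ ~ range' 1 m) (hi : i ∈ range' 1 m)
    (hj : j ∈ range' 1 m) (s : ℕ) :
    (bowtieRow m ρ s).idxOf i < (bowtieRow m ρ s).idxOf j ↔ ρ.idxOf i < ρ.idxOf j := by
  unfold bowtieRow
  split_ifs
  · exact idxOf_append_lt_idxOf_append_iff_left (hρ.mem_iff.2 hi) (hρ.mem_iff.2 hj)
  · exact idxOf_append_lt_idxOf_append_iff_right (notMem_map_add_of_perm_range' hρ hi)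
      (notMem_map_add_of_perm_range' hρ hj)

lemma idxOf_add_lt_idxOf_add_bowtieRow_iff (hρ : ρ ~ range' 1 m) (hi : i ∈ range' 1 m)
    (hj : j ∈ range' 1 m) (s : ℕ) :
    (bowtieRow m ρ s).idxOf (i + m) < (bowtieRow m ρ s).idxOf (j + m) ↔
      ρ.idxOf i < ρ.idxOf j := by
  have hinj : Function.Injective (· + m) := add_left_injective m
  unfold bowtieRow
  split_ifs
  · rw [idxOf_append_lt_idxOf_append_iff_right (add_notMem_of_perm_range' hρ hi)
      (add_notMem_of_perm_range' hρ hj), idxOf_map_of_injective hinj, idxOf_map_of_injective hinj]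
  · have hi' : i + m ∈ ρ.map (· + m) := mem_map_of_mem (hρ.mem_iff.2 hi)
    have hj' : j + m ∈ ρ.map (· + m) := mem_map_of_mem (hρ.mem_iff.2 hj)
    rw [idxOf_append_lt_idxOf_append_iff_left hi' hj', idxOf_map_of_injective hinj,
      idxOf_map_of_injective hinj]

lemma idxOf_lt_idxOf_add_bowtieRow_iff (hρ : ρ ~ range' 1 m) (hi : i ∈ range' 1 m)
    (hj : j ∈ range' 1 m) (s : ℕ) :
    (bowtieRow m ρ s).idxOf i < (bowtieRow m ρ s).idxOf (j + m) ↔ s % 2 = 0 := by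
  unfold bowtieRow
  split_ifs with hs
  · exact iff_of_true (idxOf_append_lt_idxOf_append (hρ.mem_iff.2 hi)
      (add_notMem_of_perm_range' hρ hj)) hs
  · exact iff_of_false (idxOf_append_lt_idxOf_append (mem_map_of_mem (hρ.mem_iff.2 hj))
      (notMem_map_add_of_perm_range' hρ hi)).not_gt hs

lemma perm_of_mem_bowtie (hP : ∀ ρ ∈ P, ρ ~ range' 1 m) {σ : List ℕ}
    (hσ : σ ∈ bowtie P (P.map fun ρ => ρ.map (· + m))) : σ ~ range' 1 (m + m) := by
  rw [bowtie_map_add] at hσ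
  obtain ⟨p, hp, rfl⟩ := mem_map.1 hσ
  exact bowtieRow_perm (hP _ (fst_mem_of_mem_zipIdx hp)) p.2

lemma prefCount_bowtie (hP : ∀ ρ ∈ P, ρ ~ range' 1 m) (hi : i ∈ range' 1 m)
    (hj : j ∈ range' 1 m) :
    prefCount (bowtie P (P.map fun ρ => ρ.map (· + m))) i j = prefCount P i j := by
  rw [bowtie_map_add, prefCount_eq_countP, prefCount_eq_countP, countP_map,
    ← countP_zipIdx_fst P]
  exact countP_congr fun p hp => by
    simpa using idxOf_lt_idxOf_bowtieRow_iff (hP _ (fst_mem_of_mem_zipIdx hp)) hi hj p.2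

lemma prefCount_bowtie_add_add (hP : ∀ ρ ∈ P, ρ ~ range' 1 m) (hi : i ∈ range' 1 m)
    (hj : j ∈ range' 1 m) :
    prefCount (bowtie P (P.map fun ρ => ρ.map (· + m))) (i + m) (j + m) = prefCount P i j := by
  rw [bowtie_map_add, prefCount_eq_countP, prefCount_eq_countP, countP_map,
    ← countP_zipIdx_fst P]
  exact countP_congr fun p hp => by
    simpa using idxOf_add_lt_idxOf_add_bowtieRow_iff (hP _ (fst_mem_of_mem_zipIdx hp)) hi hj p.2

lemma prefCount_bowtie_add_right (hP : ∀ ρ ∈ P, ρ ~ range' 1 m) (hi : i ∈ range' 1 m)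
    (hj : j ∈ range' 1 m) :
    prefCount (bowtie P (P.map fun ρ => ρ.map (· + m))) i (j + m) = (P.length + 1) / 2 := by
  rw [bowtie_map_add, prefCount_eq_countP, countP_map, ← countP_mod_two_eq_zero_range,
    ← countP_zipIdx_snd]
  exact countP_congr fun p hp => by
    simpa using idxOf_lt_idxOf_add_bowtieRow_iff (hP _ (fst_mem_of_mem_zipIdx hp)) hi hj p.2

lemma dropLast_bowtie_map_add (hP : P ≠ []) :
    (bowtie P (P.map fun ρ => ρ.map (· + m))).dropLast =
      bowtie P.dropLast (P.dropLast.map fun ρ => ρ.map (· + m)) := by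
  rw [bowtie_map_add, bowtie_map_add]
  conv_lhs => rw [← dropLast_append_getLast hP]
  simp [zipIdx_append]

end bowtie

section recursion

variable {n i j : ℕ} {S : List (List ℕ)}

lemma eta_succ_of_mem (hi : i ∈ range' 1 (2 ^ (n + 3))) (hj : j ∈ range' 1 (2 ^ (n + 3))) :
    eta (n + 1) i j = eta n i j := by
  rw [mem_range'_1] at hi hj
  rw [eta, if_pos ⟨by omega, by omega⟩]

lemma eta_succ_add_add (hi : i ∈ range' 1 (2 ^ (n + 3))) (hj : j ∈ range' 1 (2 ^ (n + 3))) :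
    eta (n + 1) (i + 2 ^ (n + 3)) (j + 2 ^ (n + 3)) = eta n i j := by
  rw [mem_range'_1] at hi hj
  rw [eta, if_neg (by omega), if_pos ⟨by omega, by omega⟩, Nat.add_sub_cancel,
    Nat.add_sub_cancel]

lemma eta_succ_add_right (hi : i ∈ range' 1 (2 ^ (n + 3))) (hj : j ∈ range' 1 (2 ^ (n + 3))) :
    eta (n + 1) i (j + 2 ^ (n + 3)) = decide ((i + j) % 2 = 0) := by
  have h : 2 ^ (n + 3) = 2 * 2 ^ (n + 2) := by ring
  rw [mem_range'_1] at hi hj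
  rw [eta, if_neg (by omega), if_neg (by omega), if_pos (by omega), decide_eq_decide]
  omega

lemma eta_succ_add_left (hi : i ∈ range' 1 (2 ^ (n + 3))) (hj : j ∈ range' 1 (2 ^ (n + 3))) :
    eta (n + 1) (i + 2 ^ (n + 3)) j = decide ((i + j) % 2 = 1) := by
  have h : 2 ^ (n + 3) = 2 * 2 ^ (n + 2) := by ring
  rw [mem_range'_1] at hi hj
  rw [eta, if_neg (by omega), if_neg (by omega), if_neg (by omega), decide_eq_decide]
  omega

def extendProfile (n : ℕ) (S : List (List ℕ)) : List (List ℕ) :=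
  vRows (n + 1) ++ bowtie S (S.map fun ρ => ρ.map (· + 2 ^ (n + 3)))

lemma Rprofile_succ (n : ℕ) : Rprofile (n + 1) = extendProfile n (Rprofile n) := rfl

lemma length_extendProfile : (extendProfile n S).length = S.length + 4 := by
  simp [extendProfile, vRows, bowtie_map_add]

lemma dropLast_extendProfile (hS : S ≠ []) :
    (extendProfile n S).dropLast = extendProfile n S.dropLast := by
  rw [extendProfile, extendProfile, dropLast_append_of_ne_nil (by simpa [bowtie_map_add] using hS),
    dropLast_bowtie_map_add hS]

lemma perm_of_mem_extendProfile (hS : ∀ ρ ∈ S, ρ ~ range' 1 (2 ^ (n + 3))) {ρ : List ℕ}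
    (hρ : ρ ∈ extendProfile n S) : ρ ~ range' 1 (2 ^ (n + 4)) := by
  rcases mem_append.1 hρ with h | h
  · exact perm_of_mem_vRows h
  · rw [show 2 ^ (n + 4) = 2 ^ (n + 3) + 2 ^ (n + 3) by ring]
    exact perm_of_mem_bowtie hS h

theorem generates_extendProfile (hS : Generates S (2 ^ (n + 3)) (eta n)) :
    Generates (extendProfile n S) (2 ^ (n + 4)) (eta (n + 1)) := by
  obtain ⟨hrows, htour⟩ := hS
  have hrows' := fun ρ => perm_of_mem_extendProfile (ρ := ρ) hrows
  have hdouble : 2 ^ (n + 4) = 2 ^ (n + 3) + 2 ^ (n + 3) := by ring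
  refine ⟨hrows', fun i hi j hj hij => ?_⟩
  have htotal := prefCount_add_prefCount_swap hij fun ρ hρ => (hrows' ρ hρ).mem_iff.2 hi
  rw [length_extendProfile] at htotal
  simp only [extendProfile, prefCount_append] at htotal ⊢
  replace hi := mem_range'_one_add_self (hdouble ▸ hi)
  replace hj := mem_range'_one_add_self (hdouble ▸ hj)
  rcases hi with hi | ⟨i, hi, rfl⟩ <;> rcases hj with hj | ⟨j, hj, rfl⟩
  · rw [eta_succ_of_mem hi hj, prefCount_vRows_of_mem hi hj hij,
      prefCount_vRows_of_mem hj hi hij.symm, prefCount_bowtie hrows hi hj,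
      prefCount_bowtie hrows hj hi, htour i hi j hj hij, Nat.add_lt_add_iff_left]
  · rw [eta_succ_add_right hi hj]
    rw [prefCount_vRows_add_right hi hj, prefCount_bowtie_add_right hrows hi hj] at htotal ⊢
    rw [decide_eq_true_iff]
    split_ifs at htotal ⊢ <;> omega
  · rw [eta_succ_add_left hi hj]
    rw [prefCount_vRows_add_right hj hi, prefCount_bowtie_add_right hrows hj hi] at htotal ⊢
    rw [decide_eq_true_iff]
    split_ifs at htotal ⊢ <;> omega
  · have hij' : i ≠ j := fun h => hij (h ▸ rfl)
    rw [eta_succ_add_add hi hj, prefCount_vRows_add_add hi hj hij',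
      prefCount_vRows_add_add hj hi hij'.symm, prefCount_bowtie_add_add hrows hi hj,
      prefCount_bowtie_add_add hrows hj hi, htour i hi j hj hij', Nat.add_lt_add_iff_left]

end recursion

theorem generates_Rprofile (n : ℕ) : Generates (Rprofile n) (2 ^ (n + 3)) (eta n) := by
  induction n with
  | zero => exact ⟨by decide, by decide⟩
  | succ n ih => exact generates_extendProfile ih

theorem length_Rprofile (n : ℕ) : (Rprofile n).length = 4 * n + 10 := by
  induction n with
  | zero => rfl
  | succ n ih => rw [Rprofile_succ, length_extendProfile, ih]; ring

theorem generates_dropLast_Rprofile (n : ℕ) :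
    Generates (Rprofile n).dropLast (2 ^ (n + 3)) (eta n) := by
  induction n with
  | zero => exact ⟨by decide, by decide⟩
  | succ n ih =>
    rw [Rprofile_succ, dropLast_extendProfile (ne_nil_of_length_pos (by simp [length_Rprofile]))]
    exact generates_extendProfile ih

/-- Theorem 2: for every `n`, the voting profile `R_n` has `4n+10` rows and generates the
tournament `η_n` on `{1,…,2^(n+3)}`; the profile `R̃_n` obtained by deleting the last
row of `R_n` has `4n+9` rows and also generates `η_n`. -/
theorem stmt6 (n : ℕ) :
    (Rprofile n).length = 4*n + 10 ∧
    Generates (Rprofile n) (2^(n+3)) (eta n) ∧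
    (Rprofile n).dropLast.length = 4*n + 9 ∧
    Generates (Rprofile n).dropLast (2^(n+3)) (eta n) :=
  ⟨length_Rprofile n, generates_Rprofile n, by simp [length_Rprofile],
    generates_dropLast_Rprofile n⟩
end

section
/- For every n ≥ 3 there exists a voting profile with exactly 4n − 3 voters on the candidate set [2^n] such that, for every candidate i ∈ [2^n], there is a bracket π for which i is the winner of the single-elimination knockout tournament in which each pairwise challenge is decided by the majority of the voters' preference lists. -/
/-!
Induction on `n`, starting from an explicit profile of 9 voters on 8 candidates. Let `R` be a
profile on `[M]`, `M = 2^n`, split into `t` voters `T` and `t - 1` voters `S`, and view `[2M]` as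
a lower half `a` and an upper half `a + M`. Every voter of `T` ranks the lower half by their old
ranking and then the upper half by its shift; the voters of `S` put the shifted copy first; four
more voters rank the upper half before the lower one, increasingly or decreasingly, or
interleave `a, a + M` in increasing or decreasing order of `a`. The four new voters split every
pair inside a half 2–2, so each half reproduces the majority tournament of `R`; moreover `a`
beats its copy `a + M` by `t + 2` to `t + 1`, but loses to every other `c + M` by `t + 1` to
`t + 2`. Hence if `π` is won by `a`, then `π ++ (π + M)` is won by `a`, and if `π₁` is won by
some `a ≠ c` and `π₂` by `c`, then `π₁ ++ (π₂ + M)` is won by `c + M`. Each doubling adds four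
voters.
-/

open List

namespace Knockout

section Rounds

variable {beats beats' : ℕ → ℕ → Bool}

theorem roundStep_subset : ∀ l : List ℕ, roundStep beats l ⊆ l
  | [] | [_] => Subset.refl _
  | a :: b :: l => by
      rw [roundStep]
      refine cons_subset.2 ⟨by split <;> simp, fun x hx => ?_⟩
      simp [roundStep_subset l hx]

theorem length_roundStep : ∀ l : List ℕ, (roundStep beats l).length = (l.length + 1) / 2
  | [] | [_] => by simp [roundStep]
  | a :: b :: l => by
      simp only [roundStep, length_cons, length_roundStep l]
      omega

theorem roundStep_append : ∀ {l₁ : List ℕ} (l₂ : List ℕ), Even l₁.length →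
    roundStep beats (l₁ ++ l₂) = roundStep beats l₁ ++ roundStep beats l₂
  | [], _, _ => rfl
  | [_], _, h => by simp at h
  | a :: b :: l₁, l₂, h => by
      simp only [cons_append, roundStep, roundStep_append l₂ (by simpa [parity_simps] using h)]

theorem roundStep_map (f : ℕ → ℕ) : ∀ {l : List ℕ},
    (∀ x ∈ l, ∀ y ∈ l, beats' (f x) (f y) = beats x y) →
      roundStep beats' (l.map f) = (roundStep beats l).map f
  | [], _ | [_], _ => rfl
  | a :: b :: l, h => by
      have hl := roundStep_map f fun x hx y hy => h x (mem_cons_of_mem _ (mem_cons_of_mem _ hx))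
        y (mem_cons_of_mem _ (mem_cons_of_mem _ hy))
      simp only [map_cons, roundStep, h a (by simp) b (by simp), hl]
      split <;> rfl

theorem iterate_roundStep_map (f : ℕ → ℕ) (n : ℕ) {l : List ℕ}
    (h : ∀ x ∈ l, ∀ y ∈ l, beats' (f x) (f y) = beats x y) :
    (roundStep beats')^[n] (l.map f) = ((roundStep beats)^[n] l).map f := by
  induction n generalizing l with
  | zero => rfl
  | succ n ih =>
      rw [Function.iterate_succ_apply, Function.iterate_succ_apply, roundStep_map f h]
      exact ih fun x hx y hy => h x (roundStep_subset l hx) y (roundStep_subset l hy)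

theorem iterate_roundStep_append {n : ℕ} {l₁ : List ℕ} (l₂ : List ℕ)
    (h : l₁.length = 2 ^ n) :
    (roundStep beats)^[n] (l₁ ++ l₂) =
      (roundStep beats)^[n] l₁ ++ (roundStep beats)^[n] l₂ := by
  induction n generalizing l₁ l₂ with
  | zero => rfl
  | succ n ih =>
      rw [Function.iterate_succ_apply, Function.iterate_succ_apply, Function.iterate_succ_apply,
        roundStep_append l₂ ⟨2 ^ n, by rw [h, pow_succ]; ring⟩]
      exact ih _ (by rw [length_roundStep, h, pow_succ]; omega)

theorem iterate_roundStep_eq_singleton {n : ℕ} {l : List ℕ} (h : l.length = 2 ^ n) :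
    (roundStep beats)^[n] l = [knockWinner n beats l] := by
  induction n generalizing l with
  | zero =>
      obtain ⟨x, rfl⟩ := length_eq_one_iff.1 h
      rfl
  | succ n ih =>
      rw [knockWinner, Function.iterate_succ_apply,
        ih (by rw [length_roundStep, h, pow_succ]; omega)]
      rfl

theorem knockWinner_map (f : ℕ → ℕ) {n : ℕ} {π : List ℕ} (hπ : π.length = 2 ^ n)
    (h : ∀ x ∈ π, ∀ y ∈ π, beats' (f x) (f y) = beats x y) :
    knockWinner n beats' (π.map f) = f (knockWinner n beats π) := by
  rw [knockWinner, iterate_roundStep_map f n h, iterate_roundStep_eq_singleton hπ]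
  rfl

theorem knockWinner_congr {n : ℕ} {π : List ℕ} (hπ : π.length = 2 ^ n)
    (h : ∀ x ∈ π, ∀ y ∈ π, beats' x y = beats x y) :
    knockWinner n beats' π = knockWinner n beats π := by
  simpa using knockWinner_map id hπ h

theorem knockWinner_append {n : ℕ} {π₁ π₂ : List ℕ} (h₁ : π₁.length = 2 ^ n)
    (h₂ : π₂.length = 2 ^ n) :
    knockWinner (n + 1) beats (π₁ ++ π₂) =
      if beats (knockWinner n beats π₁) (knockWinner n beats π₂) then
        knockWinner n beats π₁
      else knockWinner n beats π₂ := by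
  rw [knockWinner, Function.iterate_succ_apply', iterate_roundStep_append _ h₁,
    iterate_roundStep_eq_singleton h₁, iterate_roundStep_eq_singleton h₂]
  rfl

end Rounds

section Rows

theorem idxOf_range' {s k a : ℕ} (ha : a ∈ range' s k) : (range' s k).idxOf a = a - s := by
  induction k generalizing s with
  | zero => simp at ha
  | succ k ih =>
      rw [range'_succ]
      rcases eq_or_ne s a with rfl | hne
      · simp
      · rw [mem_range'_1] at ha
        rw [idxOf_cons_ne _ hne, ih (mem_range'_1.2 (by omega))]
        omega

theorem idxOf_reverse {α : Type*} [BEq α] [LawfulBEq α] {l : List α} {a : α} (hl : l.Nodup)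
    (ha : a ∈ l) : l.reverse.idxOf a = l.length - 1 - l.idxOf a := by
  induction l with
  | nil => simp at ha
  | cons x l ih =>
      rw [reverse_cons]
      rcases eq_or_ne x a with rfl | hne
      · rw [idxOf_append_of_notMem (by simpa using (nodup_cons.1 hl).1)]
        simp
      · have ha' : a ∈ l := (mem_cons.1 ha).resolve_left hne.symm
        rw [idxOf_append_of_mem (mem_reverse.2 ha'), ih (nodup_cons.1 hl).2 ha',
          idxOf_cons_ne _ hne, length_cons]
        have := idxOf_lt_length_of_mem ha'
        omega

theorem idxOf_map_of_injective {α β : Type*} [BEq α] [LawfulBEq α] [BEq β] [LawfulBEq β]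
    {f : α → β} (hf : Function.Injective f) (a : α) (l : List α) :
    (l.map f).idxOf (f a) = l.idxOf a := by
  induction l with
  | nil => rfl
  | cons x l ih =>
      rcases eq_or_ne x a with rfl | hne
      · simp
      · rw [map_cons, idxOf_cons_ne _ (hf.ne hne), idxOf_cons_ne _ hne, ih]

variable {M a : ℕ} {ρ : List ℕ}

def lowerFirst (M : ℕ) (ρ : List ℕ) : List ℕ := ρ ++ ρ.map (· + M)

def upperFirst (M : ℕ) (ρ : List ℕ) : List ℕ := ρ.map (· + M) ++ ρ

def interleave (M : ℕ) (ρ : List ℕ) : List ℕ := ρ.flatMap fun x => [x, x + M]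

theorem idxOf_lowerFirst_lower (ha : a ∈ ρ) : (lowerFirst M ρ).idxOf a = ρ.idxOf a :=
  idxOf_append_of_mem ha

theorem idxOf_lowerFirst_upper (hρ : ρ ⊆ range' 1 M) (ha : a ∈ ρ) :
    (lowerFirst M ρ).idxOf (a + M) = ρ.length + ρ.idxOf a := by
  have := mem_range'_1.1 (hρ ha)
  rw [lowerFirst, idxOf_append_of_notMem fun h => by have := mem_range'_1.1 (hρ h); omega,
    idxOf_map_of_injective (add_left_injective M)]

theorem idxOf_upperFirst_lower (hρ : ρ ⊆ range' 1 M) (ha : a ∈ ρ) :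
    (upperFirst M ρ).idxOf a = ρ.length + ρ.idxOf a := by
  have := mem_range'_1.1 (hρ ha)
  rw [upperFirst, idxOf_append_of_notMem, length_map]
  simp only [mem_map, not_exists, not_and]
  intro x hx
  have := mem_range'_1.1 (hρ hx)
  omega

theorem idxOf_upperFirst_upper (ha : a ∈ ρ) : (upperFirst M ρ).idxOf (a + M) = ρ.idxOf a := by
  rw [upperFirst, idxOf_append_of_mem (mem_map_of_mem (f := (· + M)) ha),
    idxOf_map_of_injective (add_left_injective M)]

theorem idxOf_interleave_lower (hρ : ρ ⊆ range' 1 M) (ha : a ∈ ρ) :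
    (interleave M ρ).idxOf a = 2 * ρ.idxOf a := by
  induction ρ with
  | nil => simp at ha
  | cons x ρ ih =>
      have hx := mem_range'_1.1 (hρ mem_cons_self)
      have ha' := mem_range'_1.1 (hρ ha)
      rw [interleave, flatMap_cons, cons_append, cons_append, nil_append]
      rcases eq_or_ne x a with rfl | hne
      · simp
      · rw [idxOf_cons_ne _ hne, idxOf_cons_ne _ (by omega), idxOf_cons_ne _ hne,
          ← interleave, ih (cons_subset.1 hρ).2 ((mem_cons.1 ha).resolve_left hne.symm)]
        omega

theorem idxOf_interleave_upper (hρ : ρ ⊆ range' 1 M) (ha : a ∈ ρ) :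
    (interleave M ρ).idxOf (a + M) = 2 * ρ.idxOf a + 1 := by
  induction ρ with
  | nil => simp at ha
  | cons x ρ ih =>
      have hx := mem_range'_1.1 (hρ mem_cons_self)
      have ha' := mem_range'_1.1 (hρ ha)
      rw [interleave, flatMap_cons, cons_append, cons_append, nil_append]
      rcases eq_or_ne x a with rfl | hne
      · rw [idxOf_cons_ne _ (by omega), idxOf_cons_self, idxOf_cons_self]
      · rw [idxOf_cons_ne _ (by omega), idxOf_cons_ne _ (by omega), idxOf_cons_ne _ hne,
          ← interleave, ih (cons_subset.1 hρ).2 ((mem_cons.1 ha).resolve_left hne.symm)]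
        omega

end Rows

theorem lowerFirst_range' (M : ℕ) : lowerFirst M (range' 1 M) = range' 1 (2 * M) := by
  rw [lowerFirst, two_mul, ← range'_append_1]
  congr 1
  simpa [Nat.add_comm] using map_add_range' (a := M) 1 M 1

theorem _root_.List.Perm.lowerFirst {M : ℕ} {ρ σ : List ℕ} (h : ρ.Perm σ) :
    (lowerFirst M ρ).Perm (lowerFirst M σ) :=
  h.append (h.map _)

theorem upperFirst_perm_lowerFirst (M : ℕ) (ρ : List ℕ) :
    (upperFirst M ρ).Perm (lowerFirst M ρ) :=
  perm_append_comm

theorem interleave_perm_lowerFirst (M : ℕ) (ρ : List ℕ) :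
    (interleave M ρ).Perm (lowerFirst M ρ) := by
  induction ρ with
  | nil => rfl
  | cons x ρ ih =>
      simp only [interleave, lowerFirst, flatMap_cons, map_cons, cons_append, nil_append] at ih ⊢
      exact (ih.cons _).cons x |>.trans (perm_middle.symm.cons x)

section Profiles

def majority (R : List (List ℕ)) (a b : ℕ) : Bool := decide (prefCount R b a < prefCount R a b)

theorem prefCount_eq_countP (R : List (List ℕ)) (i j : ℕ) :
    prefCount R i j = R.countP fun ρ => decide (ρ.idxOf i < ρ.idxOf j) :=
  countP_eq_length_filter.symm

theorem prefCount_append (R₁ R₂ : List (List ℕ)) (i j : ℕ) :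
    prefCount (R₁ ++ R₂) i j = prefCount R₁ i j + prefCount R₂ i j := by
  simp [prefCount_eq_countP]

theorem prefCount_map (E : List ℕ → List ℕ) (R : List (List ℕ)) (i j : ℕ) :
    prefCount (R.map E) i j = R.countP fun ρ => decide ((E ρ).idxOf i < (E ρ).idxOf j) := by
  simp [prefCount_eq_countP, Function.comp_def]

def extraVoters (M : ℕ) : List (List ℕ) :=
  [upperFirst M (range' 1 M), upperFirst M (range' 1 M).reverse,
    interleave M (range' 1 M), interleave M (range' 1 M).reverse]

def doubleProfile (M : ℕ) (T S : List (List ℕ)) : List (List ℕ) :=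
  T.map (lowerFirst M) ++ S.map (upperFirst M) ++ extraVoters M

theorem length_doubleProfile (M : ℕ) (T S : List (List ℕ)) :
    (doubleProfile M T S).length = T.length + S.length + 4 := by
  simp [doubleProfile, extraVoters, Nat.add_assoc]

theorem perm_of_mem_doubleProfile {M : ℕ} {T S : List (List ℕ)}
    (hT : ∀ ρ ∈ T, ρ.Perm (range' 1 M)) (hS : ∀ ρ ∈ S, ρ.Perm (range' 1 M)) :
    ∀ ρ ∈ doubleProfile M T S, ρ.Perm (range' 1 (2 * M)) := by
  have hdesc := (reverse_perm (range' 1 M)).lowerFirst (M := M)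
  rw [← lowerFirst_range']
  simp only [doubleProfile, extraVoters, mem_append, mem_map, mem_cons, not_mem_nil, or_false]
  rintro ρ ((⟨σ, hσ, rfl⟩ | ⟨σ, hσ, rfl⟩) | rfl | rfl | rfl | rfl)
  · exact (hT σ hσ).lowerFirst
  · exact (upperFirst_perm_lowerFirst M σ).trans (hS σ hσ).lowerFirst
  · exact upperFirst_perm_lowerFirst M _
  · exact (upperFirst_perm_lowerFirst M _).trans hdesc
  · exact interleave_perm_lowerFirst M _
  · exact (interleave_perm_lowerFirst M _).trans hdesc

theorem prefCount_doubleProfile (M : ℕ) (T S : List (List ℕ)) (i j : ℕ) :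
    prefCount (doubleProfile M T S) i j = prefCount (T.map (lowerFirst M)) i j +
      prefCount (S.map (upperFirst M)) i j + prefCount (extraVoters M) i j := by
  simp only [doubleProfile, prefCount_append]

variable {M a c : ℕ} (ha : a ∈ range' 1 M)

section Self

include ha

theorem prefCount_extraVoters_lower_upper_self : prefCount (extraVoters M) a (a + M) = 2 := by
  simp [extraVoters, prefCount_eq_countP, idxOf_upperFirst_lower, idxOf_upperFirst_upper,
    idxOf_interleave_lower, idxOf_interleave_upper, ha]

theorem prefCount_extraVoters_upper_lower_self : prefCount (extraVoters M) (a + M) a = 2 := by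
  have := mem_range'_1.1 ha
  simp [extraVoters, prefCount_eq_countP, countP_cons, idxOf_upperFirst_lower,
    idxOf_upperFirst_upper, idxOf_interleave_lower, idxOf_interleave_upper, idxOf_range',
    idxOf_reverse, nodup_range', ha]
  split_ifs <;> omega

end Self

variable (hc : c ∈ range' 1 M)

section Pairs

include ha hc

section Stacks

variable {R : List (List ℕ)} (hR : ∀ ρ ∈ R, ρ.Perm (range' 1 M))
include hR

theorem prefCount_map_lowerFirst_lower :
    prefCount (R.map (lowerFirst M)) a c = prefCount R a c := by
  rw [prefCount_map, prefCount_eq_countP]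
  refine countP_congr fun ρ hρ => ?_
  have hperm := hR ρ hρ
  rw [idxOf_lowerFirst_lower (hperm.mem_iff.2 ha), idxOf_lowerFirst_lower (hperm.mem_iff.2 hc)]

theorem prefCount_map_lowerFirst_upper :
    prefCount (R.map (lowerFirst M)) (a + M) (c + M) = prefCount R a c := by
  rw [prefCount_map, prefCount_eq_countP]
  refine countP_congr fun ρ hρ => ?_
  have hperm := hR ρ hρ
  rw [idxOf_lowerFirst_upper hperm.subset (hperm.mem_iff.2 ha),
    idxOf_lowerFirst_upper hperm.subset (hperm.mem_iff.2 hc)]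
  simp only [decide_eq_true_eq, Nat.add_lt_add_iff_left]

theorem prefCount_map_lowerFirst_lower_upper :
    prefCount (R.map (lowerFirst M)) a (c + M) = R.length := by
  refine (prefCount_map _ _ _ _).trans (countP_eq_length.2 fun ρ hρ => ?_)
  have hperm := hR ρ hρ
  rw [idxOf_lowerFirst_lower (hperm.mem_iff.2 ha),
    idxOf_lowerFirst_upper hperm.subset (hperm.mem_iff.2 hc)]
  exact decide_eq_true (Nat.lt_add_right _ (idxOf_lt_length_of_mem (hperm.mem_iff.2 ha)))

theorem prefCount_map_lowerFirst_upper_lower :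
    prefCount (R.map (lowerFirst M)) (c + M) a = 0 := by
  refine (prefCount_map _ _ _ _).trans (countP_eq_zero.2 fun ρ hρ => ?_)
  have hperm := hR ρ hρ
  rw [idxOf_lowerFirst_lower (hperm.mem_iff.2 ha),
    idxOf_lowerFirst_upper hperm.subset (hperm.mem_iff.2 hc)]
  exact ne_true_of_eq_false (decide_eq_false (Nat.not_lt.2
    ((idxOf_lt_length_of_mem (hperm.mem_iff.2 ha)).le.trans (Nat.le_add_right _ _))))

theorem prefCount_map_upperFirst_lower :
    prefCount (R.map (upperFirst M)) a c = prefCount R a c := by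
  rw [prefCount_map, prefCount_eq_countP]
  refine countP_congr fun ρ hρ => ?_
  have hperm := hR ρ hρ
  rw [idxOf_upperFirst_lower hperm.subset (hperm.mem_iff.2 ha),
    idxOf_upperFirst_lower hperm.subset (hperm.mem_iff.2 hc)]
  simp only [decide_eq_true_eq, Nat.add_lt_add_iff_left]

theorem prefCount_map_upperFirst_upper :
    prefCount (R.map (upperFirst M)) (a + M) (c + M) = prefCount R a c := by
  rw [prefCount_map, prefCount_eq_countP]
  refine countP_congr fun ρ hρ => ?_
  have hperm := hR ρ hρ
  rw [idxOf_upperFirst_upper (hperm.mem_iff.2 ha), idxOf_upperFirst_upper (hperm.mem_iff.2 hc)]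

theorem prefCount_map_upperFirst_lower_upper :
    prefCount (R.map (upperFirst M)) a (c + M) = 0 := by
  refine (prefCount_map _ _ _ _).trans (countP_eq_zero.2 fun ρ hρ => ?_)
  have hperm := hR ρ hρ
  rw [idxOf_upperFirst_lower hperm.subset (hperm.mem_iff.2 ha),
    idxOf_upperFirst_upper (hperm.mem_iff.2 hc)]
  exact ne_true_of_eq_false (decide_eq_false (Nat.not_lt.2
    ((idxOf_lt_length_of_mem (hperm.mem_iff.2 hc)).le.trans (Nat.le_add_right _ _))))

theorem prefCount_map_upperFirst_upper_lower :
    prefCount (R.map (upperFirst M)) (c + M) a = R.length := by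
  refine (prefCount_map _ _ _ _).trans (countP_eq_length.2 fun ρ hρ => ?_)
  have hperm := hR ρ hρ
  rw [idxOf_upperFirst_lower hperm.subset (hperm.mem_iff.2 ha),
    idxOf_upperFirst_upper (hperm.mem_iff.2 hc)]
  exact decide_eq_true (Nat.lt_add_right _ (idxOf_lt_length_of_mem (hperm.mem_iff.2 hc)))

end Stacks

variable (hac : a ≠ c)
include hac

theorem prefCount_extraVoters_lower : prefCount (extraVoters M) a c = 2 := by
  have := mem_range'_1.1 ha
  have := mem_range'_1.1 hc
  simp [extraVoters, prefCount_eq_countP, countP_cons, idxOf_upperFirst_lower,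
    idxOf_interleave_lower, idxOf_range', idxOf_reverse, nodup_range', ha, hc]
  split_ifs <;> omega

theorem prefCount_extraVoters_upper : prefCount (extraVoters M) (a + M) (c + M) = 2 := by
  have := mem_range'_1.1 ha
  have := mem_range'_1.1 hc
  simp [extraVoters, prefCount_eq_countP, countP_cons, idxOf_upperFirst_upper,
    idxOf_interleave_upper, idxOf_range', idxOf_reverse, nodup_range', ha, hc]
  split_ifs <;> omega

theorem prefCount_extraVoters_lower_upper : prefCount (extraVoters M) a (c + M) = 1 := by
  have := mem_range'_1.1 ha
  have := mem_range'_1.1 hc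
  simp [extraVoters, prefCount_eq_countP, countP_cons, idxOf_upperFirst_lower,
    idxOf_upperFirst_upper, idxOf_interleave_lower, idxOf_interleave_upper, idxOf_range',
    idxOf_reverse, nodup_range', ha, hc]
  split_ifs <;> omega

theorem prefCount_extraVoters_upper_lower : prefCount (extraVoters M) (c + M) a = 3 := by
  have := mem_range'_1.1 ha
  have := mem_range'_1.1 hc
  simp [extraVoters, prefCount_eq_countP, countP_cons, idxOf_upperFirst_lower,
    idxOf_upperFirst_upper, idxOf_interleave_lower, idxOf_interleave_upper, idxOf_range',
    idxOf_reverse, nodup_range', ha, hc]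
  split_ifs <;> omega

end Pairs

end Profiles

section Doubling

variable {M a c : ℕ} {T S : List (List ℕ)} (hT : ∀ ρ ∈ T, ρ.Perm (range' 1 M))
  (hS : ∀ ρ ∈ S, ρ.Perm (range' 1 M))
include hT hS

theorem majority_doubleProfile_lower (ha : a ∈ range' 1 M) (hc : c ∈ range' 1 M) :
    majority (doubleProfile M T S) a c = majority (T ++ S) a c := by
  rcases eq_or_ne a c with rfl | hac
  · simp [majority]
  simp only [majority, prefCount_doubleProfile, prefCount_append,
    prefCount_map_lowerFirst_lower ha hc hT, prefCount_map_lowerFirst_lower hc ha hT,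
    prefCount_map_upperFirst_lower ha hc hS, prefCount_map_upperFirst_lower hc ha hS,
    prefCount_extraVoters_lower ha hc hac, prefCount_extraVoters_lower hc ha hac.symm]
  exact decide_eq_decide.2 (by omega)

theorem majority_doubleProfile_upper (ha : a ∈ range' 1 M) (hc : c ∈ range' 1 M) :
    majority (doubleProfile M T S) (a + M) (c + M) = majority (T ++ S) a c := by
  rcases eq_or_ne a c with rfl | hac
  · simp [majority]
  simp only [majority, prefCount_doubleProfile, prefCount_append,
    prefCount_map_lowerFirst_upper ha hc hT, prefCount_map_lowerFirst_upper hc ha hT,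
    prefCount_map_upperFirst_upper ha hc hS, prefCount_map_upperFirst_upper hc ha hS,
    prefCount_extraVoters_upper ha hc hac, prefCount_extraVoters_upper hc ha hac.symm]
  exact decide_eq_decide.2 (by omega)

theorem majority_doubleProfile_lower_upper_self (hTS : T.length = S.length + 1)
    (ha : a ∈ range' 1 M) : majority (doubleProfile M T S) a (a + M) = true := by
  simp only [majority, prefCount_doubleProfile,
    prefCount_map_lowerFirst_lower_upper ha ha hT, prefCount_map_lowerFirst_upper_lower ha ha hT,
    prefCount_map_upperFirst_lower_upper ha ha hS, prefCount_map_upperFirst_upper_lower ha ha hS,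
    prefCount_extraVoters_lower_upper_self ha, prefCount_extraVoters_upper_lower_self ha]
  exact decide_eq_true (by omega)

theorem majority_doubleProfile_lower_upper (hTS : T.length = S.length + 1)
    (ha : a ∈ range' 1 M) (hc : c ∈ range' 1 M) (hac : a ≠ c) :
    majority (doubleProfile M T S) a (c + M) = false := by
  simp only [majority, prefCount_doubleProfile,
    prefCount_map_lowerFirst_lower_upper ha hc hT, prefCount_map_lowerFirst_upper_lower ha hc hT,
    prefCount_map_upperFirst_lower_upper ha hc hS, prefCount_map_upperFirst_upper_lower ha hc hS,
    prefCount_extraVoters_lower_upper ha hc hac, prefCount_extraVoters_upper_lower ha hc hac]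
  exact decide_eq_false (by omega)

end Doubling

def AllCanWin (n : ℕ) (R : List (List ℕ)) : Prop :=
  ∀ i ∈ range' 1 (2 ^ n), ∃ π : List ℕ, π.Perm (range' 1 (2 ^ n)) ∧
    knockWinner n (majority R) π = i

theorem allCanWin_doubleProfile {n : ℕ} {T S : List (List ℕ)} (hn : n ≠ 0)
    (hT : ∀ ρ ∈ T, ρ.Perm (range' 1 (2 ^ n))) (hS : ∀ ρ ∈ S, ρ.Perm (range' 1 (2 ^ n)))
    (hTS : T.length = S.length + 1) (hwin : AllCanWin n (T ++ S)) :
    AllCanWin (n + 1) (doubleProfile (2 ^ n) T S) := by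
  have hlen {π : List ℕ} (hπ : π.Perm (range' 1 (2 ^ n))) : π.length = 2 ^ n := by
    rw [hπ.length_eq, length_range']
  have hlower {π : List ℕ} (hπ : π.Perm (range' 1 (2 ^ n))) :
      knockWinner n (majority (doubleProfile (2 ^ n) T S)) π =
        knockWinner n (majority (T ++ S)) π :=
    knockWinner_congr (hlen hπ) fun x hx y hy =>
      majority_doubleProfile_lower hT hS (hπ.subset hx) (hπ.subset hy)
  have hupper {π : List ℕ} (hπ : π.Perm (range' 1 (2 ^ n))) :
      knockWinner n (majority (doubleProfile (2 ^ n) T S)) (π.map (· + 2 ^ n)) =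
        knockWinner n (majority (T ++ S)) π + 2 ^ n :=
    knockWinner_map _ (hlen hπ) fun x hx y hy =>
      majority_doubleProfile_upper hT hS (hπ.subset hx) (hπ.subset hy)
  have hcand : range' 1 (2 ^ (n + 1)) = lowerFirst (2 ^ n) (range' 1 (2 ^ n)) := by
    rw [pow_succ', lowerFirst_range']
  have hbracket {π σ : List ℕ} (hπ : π.Perm (range' 1 (2 ^ n)))
      (hσ : σ.Perm (range' 1 (2 ^ n))) :
      (π ++ σ.map (· + 2 ^ n)).Perm (range' 1 (2 ^ (n + 1))) :=
    hcand ▸ hπ.append (hσ.map _)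
  intro i hi
  rw [hcand, lowerFirst, mem_append, mem_map] at hi
  rcases hi with hi | ⟨c, hc, rfl⟩
  · obtain ⟨π, hπ, rfl⟩ := hwin i hi
    refine ⟨π ++ π.map (· + 2 ^ n), hbracket hπ hπ, ?_⟩
    rw [knockWinner_append (hlen hπ) (by rw [length_map, hlen hπ]), hlower hπ, hupper hπ,
      majority_doubleProfile_lower_upper_self hT hS hTS hi, if_pos rfl]
  · have h2 : 2 ≤ 2 ^ n := Nat.le_self_pow hn 2
    obtain ⟨a, ha, hac⟩ : ∃ a ∈ range' 1 (2 ^ n), a ≠ c :=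
      ⟨if c = 1 then 2 else 1, by rw [mem_range'_1]; split_ifs <;> omega,
        by split_ifs <;> omega⟩
    obtain ⟨π₁, hπ₁, hw₁⟩ := hwin a ha
    obtain ⟨π₂, hπ₂, hw₂⟩ := hwin c hc
    refine ⟨π₁ ++ π₂.map (· + 2 ^ n), hbracket hπ₁ hπ₂, ?_⟩
    rw [knockWinner_append (hlen hπ₁) (by rw [length_map, hlen hπ₂]), hlower hπ₁,
      hupper hπ₂, hw₁, hw₂, majority_doubleProfile_lower_upper hT hS hTS ha hc hac,
      if_neg Bool.false_ne_true]

def profile3 : List (List ℕ) :=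
  [[2, 1, 4, 5, 6, 3, 7, 8], [4, 1, 6, 3, 8, 5, 2, 7], [3, 8, 5, 7, 2, 4, 6, 1],
   [8, 7, 3, 1, 6, 2, 4, 5], [7, 2, 6, 8, 1, 3, 4, 5], [3, 2, 6, 5, 8, 4, 7, 1],
   [4, 1, 5, 7, 8, 2, 6, 3], [6, 1, 5, 7, 2, 3, 8, 4], [5, 6, 8, 4, 7, 1, 2, 3]]

def brackets3 : List (List ℕ) :=
  [[1, 3, 2, 6, 5, 7, 8, 4], [2, 3, 4, 1, 6, 5, 8, 7], [3, 5, 4, 1, 8, 7, 2, 6],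
   [4, 1, 7, 3, 5, 8, 2, 6], [5, 7, 8, 1, 2, 3, 6, 4], [6, 3, 1, 2, 4, 7, 5, 8],
   [7, 1, 2, 6, 3, 4, 5, 8], [8, 1, 2, 6, 4, 5, 7, 3]]

theorem allCanWin_profile3 : AllCanWin 3 profile3 := by
  have : ∀ i ∈ range' 1 (2 ^ 3), ∃ π ∈ brackets3, π.Perm (range' 1 (2 ^ 3)) ∧
      knockWinner 3 (majority profile3) π = i := by
    decide
  intro i hi
  obtain ⟨π, -, hπ⟩ := this i hi
  exact ⟨π, hπ⟩

end Knockout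

/-- For every `n ≥ 3` there is a voting profile with exactly `4n - 3` voters on the
candidate set `{1,…,2^n}` such that every candidate wins the single-elimination
knockout tournament (each challenge decided by majority) for a suitable bracket. -/
theorem stmt9 (n : ℕ) (hn : 3 ≤ n) :
    ∃ R : List (List ℕ), R.length = 4*n - 3 ∧
      (∀ ρ ∈ R, ρ.Perm (List.range' 1 (2^n))) ∧
      ∀ i ∈ List.range' 1 (2^n), ∃ π : List ℕ, π.Perm (List.range' 1 (2^n)) ∧
        knockWinner n (fun a b => decide (prefCount R b a < prefCount R a b)) π = i := by
  induction n, hn using Nat.le_induction with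
  | base => exact ⟨Knockout.profile3, rfl, by decide, Knockout.allCanWin_profile3⟩
  | succ n hn ih =>
      obtain ⟨R, hlen, hR, hwin⟩ := ih
      have hT : ∀ ρ ∈ R.take (2 * n - 1), ρ.Perm (List.range' 1 (2 ^ n)) :=
        fun ρ hρ => hR ρ (List.mem_of_mem_take hρ)
      have hS : ∀ ρ ∈ R.drop (2 * n - 1), ρ.Perm (List.range' 1 (2 ^ n)) :=
        fun ρ hρ => hR ρ (List.mem_of_mem_drop hρ)
      refine ⟨Knockout.doubleProfile (2 ^ n) (R.take (2 * n - 1)) (R.drop (2 * n - 1)), ?_,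
        pow_succ' 2 n ▸ Knockout.perm_of_mem_doubleProfile hT hS,
        Knockout.allCanWin_doubleProfile (by omega) hT hS
          (by simp only [List.length_take, List.length_drop]; omega)
          (by rwa [List.take_append_drop])⟩
      simp only [Knockout.length_doubleProfile, List.length_take, List.length_drop]
      omega
end

section
/- Let X and Y be independent random variables with X ~ Poisson(λ) and Y ~ Poisson(μ), where 0 < μ < λ. Then P(X ≤ Y) ≤ exp(−(λ + μ − 2√(λμ))) = exp(−(√λ − √μ)²). -/
/-!
Chernoff's method. For `t ≥ 1` the indicator of `{X ≤ Y}` is dominated by `t^(Y - X) = t⁻¹^X t^Y`,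
whose expectation factors by independence into the probability generating functions
`E[s^X] = exp(λ(s - 1))` and `E[t^Y] = exp(μ(t - 1))` at `s = t⁻¹`. The choice `t = √λ / √μ`
balances `λ t⁻¹ = μ t = √(λμ)` and gives the exponent `-(√λ - √μ)²`.
-/

open MeasureTheory ProbabilityTheory
open scoped ENNReal

lemma lintegral_comp_eq_tsum_mul_measure_eq {Ω α : Type*} [MeasurableSpace Ω] [MeasurableSpace α]
    [Countable α] [MeasurableSingletonClass α] {P : Measure Ω} {X : Ω → α} (hX : Measurable X)
    (f : α → ℝ≥0∞) :
    ∫⁻ ω, f (X ω) ∂P = ∑' a, f a * P {ω | X ω = a} := by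
  rw [← lintegral_map (measurable_of_countable f) hX, lintegral_countable']
  congr with a
  rw [Measure.map_apply hX (measurableSet_singleton a)]
  rfl

lemma Real.hasSum_pow_mul_poisson (lam s : ℝ) :
    HasSum (fun k : ℕ ↦ s ^ k * (Real.exp (-lam) * lam ^ k / k.factorial))
      (Real.exp (lam * (s - 1))) := by
  have h := (NormedSpace.expSeries_div_hasSum_exp (lam * s)).mul_left (Real.exp (-lam))
  rw [← Real.exp_eq_exp_ℝ, ← Real.exp_add, ← show lam * (s - 1) = -lam + lam * s by ring] at h
  have hterm (k : ℕ) :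
      s ^ k * (Real.exp (-lam) * lam ^ k / k.factorial)
        = Real.exp (-lam) * ((lam * s) ^ k / k.factorial) := by ring
  simpa only [hterm] using h

lemma lintegral_ofReal_pow_eq_exp_of_poisson {Ω : Type*} [MeasurableSpace Ω] {P : Measure Ω}
    {X : Ω → ℕ} (hX : Measurable X) {lam : ℝ} (hlam : 0 ≤ lam)
    (hXp : ∀ k : ℕ, P {ω | X ω = k}
      = ENNReal.ofReal (Real.exp (-lam) * lam ^ k / (Nat.factorial k)))
    {s : ℝ} (hs : 0 ≤ s) :
    ∫⁻ ω, ENNReal.ofReal (s ^ X ω) ∂P = ENNReal.ofReal (Real.exp (lam * (s - 1))) := by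
  have hsum := Real.hasSum_pow_mul_poisson lam s
  rw [lintegral_comp_eq_tsum_mul_measure_eq hX (fun k ↦ ENNReal.ofReal (s ^ k))]
  simp_rw [hXp, ← ENNReal.ofReal_mul (pow_nonneg hs _)]
  rw [← ENNReal.ofReal_tsum_of_nonneg (fun k ↦ by positivity) hsum.summable, hsum.tsum_eq]

lemma one_le_inv_pow_mul_pow {t : ℝ} (ht : 1 ≤ t) {j k : ℕ} (hjk : j ≤ k) :
    1 ≤ t⁻¹ ^ j * t ^ k := by
  rw [inv_pow, inv_mul_eq_div, one_le_div (by positivity)]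
  exact pow_le_pow_right₀ ht hjk

lemma ProbabilityTheory.IndepFun.measure_le_le_lintegral_inv_pow_mul_lintegral_pow {Ω : Type*}
    [MeasurableSpace Ω] {P : Measure Ω} {X Y : Ω → ℕ} (hX : Measurable X) (hY : Measurable Y)
    (hindep : IndepFun X Y P) {t : ℝ} (ht : 1 ≤ t) :
    P {ω | X ω ≤ Y ω}
      ≤ (∫⁻ ω, ENNReal.ofReal (t⁻¹ ^ X ω) ∂P) * ∫⁻ ω, ENNReal.ofReal (t ^ Y ω) ∂P := by
  set F : Ω → ℝ≥0∞ := fun ω ↦ ENNReal.ofReal (t⁻¹ ^ X ω) * ENNReal.ofReal (t ^ Y ω)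
  have hF : Measurable F := by fun_prop
  have hsub : {ω | X ω ≤ Y ω} ⊆ {ω | 1 ≤ F ω} := fun ω hω ↦ by
    show 1 ≤ ENNReal.ofReal _ * ENNReal.ofReal _
    rw [← ENNReal.ofReal_mul (by positivity), ← ENNReal.ofReal_one]
    exact ENNReal.ofReal_le_ofReal (one_le_inv_pow_mul_pow ht hω)
  calc P {ω | X ω ≤ Y ω} ≤ 1 * P {ω | 1 ≤ F ω} := by rw [one_mul]; exact measure_mono hsub
    _ ≤ ∫⁻ ω, F ω ∂P := mul_meas_ge_le_lintegral hF 1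
    _ = _ := lintegral_mul_eq_lintegral_mul_lintegral_of_indepFun'' (by fun_prop) (by fun_prop)
        (hindep.comp (measurable_of_countable fun j ↦ ENNReal.ofReal (t⁻¹ ^ j))
          (measurable_of_countable fun k ↦ ENNReal.ofReal (t ^ k)))

lemma Real.add_sub_two_mul_sqrt_mul_eq_sq {a b : ℝ} (ha : 0 ≤ a) (hb : 0 ≤ b) :
    a + b - 2 * Real.sqrt (a * b) = (Real.sqrt a - Real.sqrt b) ^ 2 := by
  rw [Real.sqrt_mul ha, sub_sq, Real.sq_sqrt ha, Real.sq_sqrt hb]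
  ring

open MeasureTheory in
theorem stmt10_general {Ω : Type*} [MeasurableSpace Ω] (P : Measure Ω)
    (lam mu : ℝ) (hmu : 0 < mu) (hlm : mu < lam)
    (X Y : Ω → ℕ) (hX : Measurable X) (hY : Measurable Y)
    (hindep : ProbabilityTheory.IndepFun X Y P)
    (hXp : ∀ k : ℕ, P {ω | X ω = k}
      = ENNReal.ofReal (Real.exp (-lam) * lam ^ k / (Nat.factorial k)))
    (hYp : ∀ k : ℕ, P {ω | Y ω = k}
      = ENNReal.ofReal (Real.exp (-mu) * mu ^ k / (Nat.factorial k))) :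
    P {ω | X ω ≤ Y ω}
      ≤ ENNReal.ofReal (Real.exp (-(lam + mu - 2 * Real.sqrt (lam * mu)))) ∧
    Real.exp (-(lam + mu - 2 * Real.sqrt (lam * mu)))
      = Real.exp (-(Real.sqrt lam - Real.sqrt mu)^2) := by
  have hlam : 0 < lam := hmu.trans hlm
  have hexponent := Real.add_sub_two_mul_sqrt_mul_eq_sq hlam.le hmu.le
  refine ⟨?_, by rw [hexponent]⟩
  have hsqrt_mu : 0 < Real.sqrt mu := Real.sqrt_pos.mpr hmu
  have hsqrt_lam : 0 < Real.sqrt lam := Real.sqrt_pos.mpr hlam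
  set t := Real.sqrt lam / Real.sqrt mu
  have ht : 1 ≤ t := (one_le_div hsqrt_mu).mpr (Real.sqrt_le_sqrt hlm.le)
  calc P {ω | X ω ≤ Y ω}
      ≤ (∫⁻ ω, ENNReal.ofReal (t⁻¹ ^ X ω) ∂P) * ∫⁻ ω, ENNReal.ofReal (t ^ Y ω) ∂P :=
        hindep.measure_le_le_lintegral_inv_pow_mul_lintegral_pow hX hY ht
    _ = ENNReal.ofReal (Real.exp (lam * (t⁻¹ - 1)))
          * ENNReal.ofReal (Real.exp (mu * (t - 1))) := by
        rw [lintegral_ofReal_pow_eq_exp_of_poisson hX hlam.le hXp (by positivity),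
          lintegral_ofReal_pow_eq_exp_of_poisson hY hmu.le hYp (by positivity)]
    _ = ENNReal.ofReal (Real.exp (-(lam + mu - 2 * Real.sqrt (lam * mu)))) := by
        rw [← ENNReal.ofReal_mul (Real.exp_pos _).le, ← Real.exp_add, hexponent]
        congr 2
        simp only [t]
        field_simp
        linear_combination (Real.sqrt mu * (Real.sqrt lam - Real.sqrt mu)) * Real.sq_sqrt hlam.le
          + (Real.sqrt lam * (Real.sqrt mu - Real.sqrt lam)) * Real.sq_sqrt hmu.le

open MeasureTheory in
/-- Chernoff bound for the difference of independent Poisson random variables: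
if `X ~ Poi(λ)`, `Y ~ Poi(μ)` are independent with `0 < μ < λ`, then
`P(X ≤ Y) ≤ exp(-(λ + μ - 2√(λμ)))`, and this bound equals `exp(-(√λ - √μ)²)`. -/
theorem stmt10 {Ω : Type*} [MeasurableSpace Ω] (P : Measure Ω) [IsProbabilityMeasure P]
    (lam mu : ℝ) (hmu : 0 < mu) (hlm : mu < lam)
    (X Y : Ω → ℕ) (hX : Measurable X) (hY : Measurable Y)
    (hindep : ProbabilityTheory.IndepFun X Y P)
    (hXp : ∀ k : ℕ, P {ω | X ω = k}
      = ENNReal.ofReal (Real.exp (-lam) * lam ^ k / (Nat.factorial k)))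
    (hYp : ∀ k : ℕ, P {ω | Y ω = k}
      = ENNReal.ofReal (Real.exp (-mu) * mu ^ k / (Nat.factorial k))) :
    P {ω | X ω ≤ Y ω}
      ≤ ENNReal.ofReal (Real.exp (-(lam + mu - 2 * Real.sqrt (lam * mu)))) ∧
    Real.exp (-(lam + mu - 2 * Real.sqrt (lam * mu)))
      = Real.exp (-(Real.sqrt lam - Real.sqrt mu)^2) :=
  stmt10_general P lam mu hmu hlm X Y hX hY hindep hXp hYp
end

section
/- For every n ≥ 3 and every candidate i ∈ [2^n] there exists a bracket π of [2^n] such that w_n(η_{n−3}, π) = i and π preserves the classes of eight consecutive candidates: ⌈π_ℓ / 8⌉ = ⌈ℓ / 8⌉ for every position ℓ ∈ [2^n]. -/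
/- ### Auxiliary lemmas -/

lemma length_roundStep (b : ℕ → ℕ → Bool) : ∀ l : List ℕ,
    (roundStep b l).length = (l.length + 1) / 2
  | [] => by simp [roundStep]
  | [_] => by simp [roundStep]
  | a :: c :: rest => by
      simp only [roundStep, List.length_cons, length_roundStep b rest]
      omega

lemma roundStep_append (b : ℕ → ℕ → Bool) : ∀ l1 l2 : List ℕ, l1.length % 2 = 0 →
    roundStep b (l1 ++ l2) = roundStep b l1 ++ roundStep b l2
  | [], l2, _ => rfl
  | [_], _, h => by simp at h
  | a :: c :: rest, l2, h => by
      simp only [List.cons_append, roundStep,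
        roundStep_append b rest l2 (by simp at h; omega), List.append_eq]

lemma mem_roundStep (b : ℕ → ℕ → Bool) : ∀ l : List ℕ, ∀ x, x ∈ roundStep b l → x ∈ l
  | [], _, h => h
  | [_], _, h => h
  | a :: c :: rest, x, h => by
      simp only [roundStep, List.mem_cons] at h ⊢
      rcases h with h | h
      · split_ifs at h <;> tauto
      · have := mem_roundStep b rest x h; tauto

lemma roundStep_map (b b' : ℕ → ℕ → Bool) (f : ℕ → ℕ) :
    ∀ l : List ℕ, (∀ x ∈ l, ∀ y ∈ l, b (f x) (f y) = b' x y) →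
    roundStep b (l.map f) = (roundStep b' l).map f
  | [], _ => rfl
  | [_], _ => rfl
  | a :: c :: rest, h => by
      have hac : b (f a) (f c) = b' a c := h a (by simp) c (by simp)
      simp only [List.map_cons, roundStep, hac,
        roundStep_map b b' f rest (fun x hx y hy => h x (by simp [hx]) y (by simp [hy]))]
      congr 1
      split_ifs <;> rfl

lemma iterate_roundStep_map (b b' : ℕ → ℕ → Bool) (f : ℕ → ℕ) :
    ∀ (k : ℕ) (l : List ℕ), (∀ x ∈ l, ∀ y ∈ l, b (f x) (f y) = b' x y) →
    (roundStep b)^[k] (l.map f) = ((roundStep b')^[k] l).map f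
  | 0, l, _ => rfl
  | k+1, l, h => by
      rw [Function.iterate_succ_apply, Function.iterate_succ_apply,
        roundStep_map b b' f l h,
        iterate_roundStep_map b b' f k (roundStep b' l)
          (fun x hx y hy => h x (mem_roundStep b' l x hx) y (mem_roundStep b' l y hy))]

lemma length_iterate_roundStep (b : ℕ → ℕ → Bool) :
    ∀ (k : ℕ) (l : List ℕ), l.length = 2^k → ((roundStep b)^[k] l).length = 1
  | 0, l, h => by simpa using h
  | k+1, l, h => by
      rw [Function.iterate_succ_apply]
      refine length_iterate_roundStep b k _ ?_
      rw [length_roundStep, h, pow_succ]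
      omega

lemma iterate_roundStep_eq_singleton (b : ℕ → ℕ → Bool) (k : ℕ) (l : List ℕ)
    (h : l.length = 2^k) : (roundStep b)^[k] l = [knockWinner k b l] := by
  have h1 := length_iterate_roundStep b k l h
  unfold knockWinner
  generalize (roundStep b)^[k] l = L at h1 ⊢
  rcases L with _ | ⟨a, _ | _⟩ <;> simp_all

lemma knockWinner_map (b b' : ℕ → ℕ → Bool) (f : ℕ → ℕ) (k : ℕ) (l : List ℕ)
    (hlen : l.length = 2^k) (h : ∀ x ∈ l, ∀ y ∈ l, b (f x) (f y) = b' x y) :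
    knockWinner k b (l.map f) = f (knockWinner k b' l) := by
  unfold knockWinner
  rw [iterate_roundStep_map b b' f k l h, iterate_roundStep_eq_singleton b' k l hlen]
  rfl

lemma knockWinner_congr (b b' : ℕ → ℕ → Bool) (k : ℕ) (l : List ℕ)
    (hlen : l.length = 2^k) (h : ∀ x ∈ l, ∀ y ∈ l, b x y = b' x y) :
    knockWinner k b l = knockWinner k b' l := by
  have := knockWinner_map b b' id k l hlen (by simpa using h)
  simpa using this

lemma eta_succ_low (m x y : ℕ) (hx : x ≤ 2^(m+3)) (hy : y ≤ 2^(m+3)) :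
    eta (m+1) x y = eta m x y := by
  simp [eta, hx, hy]

lemma eta_succ_high (m x y : ℕ) (hx : 1 ≤ x) (hy : 1 ≤ y) :
    eta (m+1) (x + 2^(m+3)) (y + 2^(m+3)) = eta m x y := by
  have h1 : ¬(x + 2^(m+3) ≤ 2^(m+3) ∧ y + 2^(m+3) ≤ 2^(m+3)) := by omega
  have h2 : 2^(m+3) < x + 2^(m+3) ∧ 2^(m+3) < y + 2^(m+3) := by omega
  rw [show eta (m+1) (x + 2^(m+3)) (y + 2^(m+3)) =
      if x + 2^(m+3) ≤ 2^(m+3) ∧ y + 2^(m+3) ≤ 2^(m+3) then eta m (x + 2^(m+3)) (y + 2^(m+3))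
      else if 2^(m+3) < x + 2^(m+3) ∧ 2^(m+3) < y + 2^(m+3) then
        eta m (x + 2^(m+3) - 2^(m+3)) (y + 2^(m+3) - 2^(m+3))
      else if x + 2^(m+3) ≤ 2^(m+3) then decide ((x + 2^(m+3) + (y + 2^(m+3))) % 2 = 0)
      else decide ((x + 2^(m+3) + (y + 2^(m+3))) % 2 = 1) from rfl, if_neg h1, if_pos h2]
  congr 1 <;> omega

lemma eta_succ_cross (m x y : ℕ) (hx : x ≤ 2^(m+3)) (hy : 2^(m+3) < y) :
    eta (m+1) x y = decide ((x + y) % 2 = 0) := by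
  have h1 : ¬(x ≤ 2^(m+3) ∧ y ≤ 2^(m+3)) := by omega
  have h2 : ¬(2^(m+3) < x ∧ 2^(m+3) < y) := by omega
  rw [show eta (m+1) x y = if x ≤ 2^(m+3) ∧ y ≤ 2^(m+3) then eta m x y
    else if 2^(m+3) < x ∧ 2^(m+3) < y then eta m (x - 2^(m+3)) (y - 2^(m+3))
    else if x ≤ 2^(m+3) then decide ((x + y) % 2 = 0)
    else decide ((x + y) % 2 = 1) from rfl, if_neg h1, if_neg h2, if_pos hx]

lemma iterate_roundStep_append (b : ℕ → ℕ → Bool) :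
    ∀ (k : ℕ) (l1 l2 : List ℕ), l1.length = 2^k → l2.length = 2^k →
    (roundStep b)^[k] (l1 ++ l2) = (roundStep b)^[k] l1 ++ (roundStep b)^[k] l2
  | 0, l1, l2, _, _ => rfl
  | k+1, l1, l2, h1, h2 => by
      rw [Function.iterate_succ_apply, Function.iterate_succ_apply,
        Function.iterate_succ_apply,
        roundStep_append b l1 l2 (by rw [h1, pow_succ]; omega)]
      exact iterate_roundStep_append b k _ _
        (by rw [length_roundStep, h1, pow_succ]; omega)
        (by rw [length_roundStep, h2, pow_succ]; omega)

lemma knockWinner_append (b : ℕ → ℕ → Bool) (k : ℕ) (l1 l2 : List ℕ)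
    (h1 : l1.length = 2^k) (h2 : l2.length = 2^k) :
    knockWinner (k+1) b (l1 ++ l2) =
      if b (knockWinner k b l1) (knockWinner k b l2) then knockWinner k b l1
      else knockWinner k b l2 := by
  unfold knockWinner
  rw [Function.iterate_succ_apply', iterate_roundStep_append b k l1 l2 h1 h2,
    iterate_roundStep_eq_singleton b k l1 h1, iterate_roundStep_eq_singleton b k l2 h2]
  rw [List.singleton_append]
  rw [show roundStep b [knockWinner k b l1, knockWinner k b l2] =
      [if b (knockWinner k b l1) (knockWinner k b l2) then knockWinner k b l1
       else knockWinner k b l2] from by simp only [roundStep]]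
  rfl

/-- Main inductive lemma. -/
lemma key : ∀ (m : ℕ), ∀ i ∈ List.range' 1 (2^(m+3)),
    ∃ π : List ℕ, π.Perm (List.range' 1 (2^(m+3))) ∧
      knockWinner (m+3) (eta m) π = i ∧
      ∀ l, 1 ≤ l → l ≤ 2^(m+3) → (π.getD (l-1) 0 + 7) / 8 = (l + 7) / 8 := by
  intro m
  induction m with
  | zero =>
      intro i hi
      have hi' : i = 1 ∨ i = 2 ∨ i = 3 ∨ i = 4 ∨ i = 5 ∨ i = 6 ∨ i = 7 ∨ i = 8 := by
        simp [List.range'] at hi; omega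
      have hr : List.range' 1 (2^3) = [1,2,3,4,5,6,7,8] := by decide
      rw [hr]
      rcases hi' with rfl | rfl | rfl | rfl | rfl | rfl | rfl | rfl
      · exact ⟨[1,2,3,4,5,6,7,8], by decide, by decide,
          fun l h1 h2 => by interval_cases l <;> decide⟩
      · exact ⟨[1,3,4,5,2,6,7,8], by decide, by decide,
          fun l h1 h2 => by interval_cases l <;> decide⟩
      · exact ⟨[1,2,4,5,3,8,6,7], by decide, by decide,
          fun l h1 h2 => by interval_cases l <;> decide⟩
      · exact ⟨[1,2,3,6,4,8,5,7], by decide, by decide,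
          fun l h1 h2 => by interval_cases l <;> decide⟩
      · exact ⟨[1,3,4,6,2,5,7,8], by decide, by decide,
          fun l h1 h2 => by interval_cases l <;> decide⟩
      · exact ⟨[1,2,3,4,5,8,6,7], by decide, by decide,
          fun l h1 h2 => by interval_cases l <;> decide⟩
      · exact ⟨[1,2,3,6,4,5,7,8], by decide, by decide,
          fun l h1 h2 => by interval_cases l <;> decide⟩
      · exact ⟨[1,3,2,8,4,6,5,7], by decide, by decide,
          fun l h1 h2 => by interval_cases l <;> decide⟩
  | succ m ih =>
      intro i hi
      set c : ℕ := 2^(m+3) with hc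
      have hc8 : c = 8 * 2^m := by rw [hc]; ring
      have hc2 : 2^(m+1+3) = c + c := by rw [hc]; ring
      have hi' : 1 ≤ i ∧ i ≤ c + c := by
        rw [List.mem_range'_1, hc2] at hi; omega
      -- target winners: jL in the left half's index range, jR for the right half
      obtain ⟨jL, jR, hjL1, hjL2, hjR1, hjR2, hpar, hwin⟩ :
          ∃ jL jR, 1 ≤ jL ∧ jL ≤ c ∧ 1 ≤ jR ∧ jR ≤ c ∧
            (if (jL + (jR + c)) % 2 = 0 then jL else jR + c) = i ∧
            (i ≤ c → jL = i) := by
        rcases le_or_gt i c with h | h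
        · exact ⟨i, i, by omega, by omega, by omega, by omega, by
            rw [if_pos (by omega)], fun _ => rfl⟩
        · refine ⟨if (i - c) % 2 = 0 then i - c - 1 else i - c + 1, i - c,
            ?_, ?_, by omega, by omega, ?_, by omega⟩
          · split_ifs <;> omega
          · split_ifs <;> omega
          · split_ifs with h1 h2 h3 <;> omega
      obtain ⟨πL, hpL, hwL, hbL⟩ := ih jL (by rw [List.mem_range'_1]; omega)
      obtain ⟨πR₀, hpR, hwR, hbR⟩ := ih jR (by rw [List.mem_range'_1]; omega)
      have lenL : πL.length = c := by rw [hpL.length_eq, List.length_range']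
      have lenR₀ : πR₀.length = c := by rw [hpR.length_eq, List.length_range']
      have memL : ∀ x ∈ πL, 1 ≤ x ∧ x ≤ c := by
        intro x hx
        have := hpL.mem_iff.mp hx
        rw [List.mem_range'_1] at this; omega
      have memR : ∀ x ∈ πR₀, 1 ≤ x ∧ x ≤ c := by
        intro x hx
        have := hpR.mem_iff.mp hx
        rw [List.mem_range'_1] at this; omega
      refine ⟨πL ++ πR₀.map (· + c), ?_, ?_, ?_⟩
      · -- permutation
        have e1 : (List.range' 1 c).map (· + c) = List.range' (1+c) c := by
          rw [show ((· + c) : ℕ → ℕ) = (fun x => c + x) from by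
            funext x; exact Nat.add_comm x c, List.map_add_range', Nat.add_comm c 1]
        have e2 : List.range' 1 c ++ List.range' (1+c) c = List.range' 1 (2^(m+1+3)) := by
          rw [List.range'_append_1]
          congr 1
          omega
        rw [← e2, ← e1]
        exact hpL.append (hpR.map _)
      · -- winner
        have e : m + 1 + 3 = (m + 3) + 1 := by omega
        rw [e, knockWinner_append _ _ _ _ (by rw [lenL, hc]) (by simp [lenR₀, hc])]
        have wL : knockWinner (m+3) (eta (m+1)) πL = jL := by
          rw [knockWinner_congr (eta (m+1)) (eta m) (m+3) πL (by rw [lenL, hc])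
            (fun x hx y hy => eta_succ_low m x y (memL x hx).2 (memL y hy).2)]
          exact hwL
        have wR : knockWinner (m+3) (eta (m+1)) (πR₀.map (· + c)) = jR + c := by
          rw [knockWinner_map (eta (m+1)) (eta m) (· + c) (m+3) πR₀ (by rw [lenR₀, hc])
            (fun x hx y hy => eta_succ_high m x y (memR x hx).1 (memR y hy).1)]
          rw [hwR]
        rw [wL, wR, eta_succ_cross m jL (jR + c) (by omega) (by omega)]
        rcases Nat.eq_zero_or_pos ((jL + (jR + c)) % 2) with h0 | h0
        · rw [h0] at hpar ⊢; simpa using hpar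
        · have h1 : (jL + (jR + c)) % 2 = 1 := by omega
          rw [h1] at hpar ⊢; simpa using hpar
      · -- block property
        intro l hl1 hl2
        rw [hc2] at hl2
        rcases le_or_gt l c with h | h
        · rw [List.getD_append _ _ _ _ (by omega)]
          exact hbL l hl1 (by omega)
        · have hk : l - c - 1 < πR₀.length := by rw [lenR₀]; omega
          have hk2 : l - c - 1 < (πR₀.map (· + c)).length := by
            rw [List.length_map, lenR₀]; omega
          rw [List.getD_append_right _ _ _ _ (by rw [lenL]; omega), lenL,
            show l - 1 - c = l - c - 1 from by omega,
            List.getD_eq_getElem _ _ hk2, List.getElem_map,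
            ← List.getD_eq_getElem _ _ hk]
          have hbb := hbR (l - c) (by omega) (by omega)
          have hix : l - c - 1 = l - c - 1 := rfl
          generalize πR₀.getD (l - c - 1) 0 = x at hbb ⊢
          show (x + c + 7) / 8 = (l + 7) / 8
          generalize 2^m = t at hc8
          omega

/-- Remark 1: for `n ≥ 3`, every candidate `i ∈ {1,…,2^n}` wins the knockout tournament
under `η_{n-3}` for some bracket `π` that preserves the classes of eight consecutive
candidates: `⌈π_ℓ/8⌉ = ⌈ℓ/8⌉` for every position `ℓ` (positions are 1-based). -/
theorem stmt15 (n : ℕ) (hn : 3 ≤ n) (i : ℕ) (hi : i ∈ List.range' 1 (2^n)) :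
    ∃ π : List ℕ, π.Perm (List.range' 1 (2^n)) ∧
      knockWinner n (eta (n-3)) π = i ∧
      ∀ l, 1 ≤ l → l ≤ 2^n → (π.getD (l-1) 0 + 7) / 8 = (l + 7) / 8 := by
  obtain ⟨m, rfl⟩ : ∃ m, n = m + 3 := ⟨n - 3, by omega⟩
  have h3 : m + 3 - 3 = m := by omega
  rw [h3]
  exact key m i hi
end

section
/- Consider 8 candidates and the 10-row voting profile R₀ generating η₀. Let W₁,…,W₁₀ be independent Poisson random variables, each with mean λ/10, and let E be the event that the random voting profile consisting of W_k copies of the k-th row of R₀ generates a preference pattern different from η₀. Then P(E) ≤ 28·exp(−λ(1 − √24/5)); in particular, if λ ≥ 394 then P(E) ≤ 1/100. -/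
/-- Weighted number of preference lists ranking `i` before `j`, in the random voting
profile consisting of `W k` identical copies of the `k`-th row of `R`. -/
def wPrefCount (R : List (List ℕ)) (W : ℕ → ℕ) (i j : ℕ) : ℕ :=
  ((List.range R.length).map fun k =>
    if (R.getD k []).idxOf i < (R.getD k []).idxOf j then W k else 0).sum

/-- The event that the random voting profile consisting of `W k` copies of the `k`-th row
of `R` generates (by weighted strict majority) a preference pattern on `{1,…,m}` different
from the tournament `η`. -/
def BadEvent (R : List (List ℕ)) (m : ℕ) (η : ℕ → ℕ → Bool) (W : ℕ → ℕ) : Prop :=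
  ∃ i ∈ List.range' 1 m, ∃ j ∈ List.range' 1 m, i ≠ j ∧
    ¬ ((wPrefCount R W j i < wPrefCount R W i j) ↔ η i j = true)

open MeasureTheory ProbabilityTheory Finset Real

section Chernoff

variable {Ω ι : Type*} [MeasurableSpace Ω] {P : Measure Ω} {μ : ℝ}

theorem lintegral_ofReal_pow_eq_exp_of_poisson_s17 (hμ : 0 ≤ μ) {X : Ω → ℕ} (hX : Measurable X)
    (hpois : ∀ m : ℕ, P {ω | X ω = m} =
      ENNReal.ofReal (exp (-μ) * μ ^ m / (Nat.factorial m)))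
    {c : ℝ} (hc : 0 ≤ c) :
    ∫⁻ ω, ENNReal.ofReal c ^ X ω ∂P = ENNReal.ofReal (exp (μ * (c - 1))) := by
  have hterm (n : ℕ) : ENNReal.ofReal c ^ n * P.map X {n}
      = ENNReal.ofReal (exp (-μ) * ((c * μ) ^ n / (Nat.factorial n))) := by
    rw [Measure.map_apply hX (measurableSet_singleton n)]
    simp only [Set.preimage, Set.mem_singleton_iff]
    rw [hpois, ← ENNReal.ofReal_pow hc, ← ENNReal.ofReal_mul (by positivity), mul_pow]
    ring_nf
  have hsum : HasSum (fun n : ℕ => exp (-μ) * ((c * μ) ^ n / (Nat.factorial n)))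
      (exp (μ * (c - 1))) := by
    rw [show μ * (c - 1) = -μ + c * μ by ring, exp_add, exp_eq_exp_ℝ]
    exact (NormedSpace.expSeries_div_hasSum_exp (c * μ)).mul_left _
  rw [← lintegral_map measurable_from_top hX, lintegral_countable', tsum_congr hterm,
    ← ENNReal.ofReal_tsum_of_nonneg (fun n => by positivity) hsum.summable, hsum.tsum_eq]

theorem lintegral_prod_ofReal_pow_eq_exp_of_poisson [Fintype ι] (hμ : 0 ≤ μ)
    {X : ι → Ω → ℕ} (hX : ∀ k, Measurable (X k)) (hindep : iIndepFun X P)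
    (hpois : ∀ k, ∀ m : ℕ, P {ω | X k ω = m} =
      ENNReal.ofReal (exp (-μ) * μ ^ m / (Nat.factorial m)))
    {c : ι → ℝ} (hc : ∀ k, 0 ≤ c k) :
    ∫⁻ ω, ∏ k, ENNReal.ofReal (c k) ^ X k ω ∂P
      = ENNReal.ofReal (exp (μ * ∑ k, (c k - 1))) := by
  rw [lintegral_prod_eq_prod_lintegral_of_indepFun _ (fun k ω => ENNReal.ofReal (c k) ^ X k ω)
      (hindep.comp _ fun k => measurable_from_top) fun k => measurable_from_top.comp (hX k)]
  simp_rw [lintegral_ofReal_pow_eq_exp_of_poisson_s17 hμ (hX _) (hpois _) (hc _), mul_sum, exp_sum]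
  exact (ENNReal.ofReal_prod_of_nonneg fun k _ => (exp_pos _).le).symm

theorem one_le_prod_ite_inv_pow [Fintype ι] [DecidableEq ι] {t : ℝ} (ht : 1 ≤ t)
    (S : Finset ι) {x : ι → ℕ} (hx : ∑ k ∈ S, x k ≤ ∑ k ∈ Sᶜ, x k) :
    1 ≤ ∏ k, (if k ∈ S then t⁻¹ else t) ^ x k := by
  simp_rw [ite_pow]
  rw [← S.prod_mul_prod_compl, prod_ite_of_true fun _ => id,
    prod_ite_of_false fun _ => mem_compl.1, prod_pow_eq_pow_sum,
    prod_pow_eq_pow_sum, inv_pow, one_le_inv_mul₀ (by positivity)]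
  exact pow_le_pow_right₀ ht hx

theorem measure_sum_le_sum_compl_le_of_poisson [Fintype ι] [DecidableEq ι] (hμ : 0 ≤ μ)
    {X : ι → Ω → ℕ} (hX : ∀ k, Measurable (X k)) (hindep : iIndepFun X P)
    (hpois : ∀ k, ∀ m : ℕ, P {ω | X k ω = m} =
      ENNReal.ofReal (exp (-μ) * μ ^ m / (Nat.factorial m)))
    (S : Finset ι) {t : ℝ} (ht : 1 ≤ t) :
    P {ω | ∑ k ∈ S, X k ω ≤ ∑ k ∈ Sᶜ, X k ω}
      ≤ ENNReal.ofReal (exp (μ * (#S * (t⁻¹ - 1) + #Sᶜ * (t - 1)))) := by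
  set c : ι → ℝ := fun k => if k ∈ S then t⁻¹ else t
  have hc (k : ι) : 0 ≤ c k := by unfold c; split_ifs <;> positivity
  have hZ : Measurable fun ω => ∏ k, ENNReal.ofReal (c k) ^ X k ω :=
    Finset.measurable_prod _ fun k _ => measurable_from_top.comp (hX k)
  calc P {ω | ∑ k ∈ S, X k ω ≤ ∑ k ∈ Sᶜ, X k ω}
      ≤ P {ω | 1 ≤ ∏ k, ENNReal.ofReal (c k) ^ X k ω} := by
        refine measure_mono fun ω hω => ?_
        simp only [Set.mem_ofPred_eq, ← ENNReal.ofReal_pow (hc _),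
          ← ENNReal.ofReal_prod_of_nonneg fun k _ => pow_nonneg (hc k) _]
        exact ENNReal.one_le_ofReal.2 (one_le_prod_ite_inv_pow ht S hω)
    _ ≤ ∫⁻ ω, ∏ k, ENNReal.ofReal (c k) ^ X k ω ∂P := by
        simpa using mul_meas_ge_le_lintegral₀ hZ.aemeasurable 1
    _ = ENNReal.ofReal (exp (μ * ∑ k, (c k - 1))) :=
        lintegral_prod_ofReal_pow_eq_exp_of_poisson hμ hX hindep hpois hc
    _ = _ := by
        rw [← S.sum_add_sum_compl,
          sum_congr (s₁ := S) rfl (g := fun _ => t⁻¹ - 1) fun k hk => by simp [c, hk],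
          sum_congr (s₁ := Sᶜ) rfl (g := fun _ => t - 1) fun k hk => by
            simp [c, mem_compl.1 hk],
          sum_const, sum_const, nsmul_eq_mul, nsmul_eq_mul]

end Chernoff

def rowsRankingBefore (i j : ℕ) : Finset (Fin 10) :=
  {k | (R0.getD k []).idxOf i < (R0.getD k []).idxOf j}

theorem wPrefCount_R0 (w : ℕ → ℕ) (i j : ℕ) :
    wPrefCount R0 w i j = ∑ k ∈ rowsRankingBefore i j, w k := by
  rw [rowsRankingBefore, sum_filter, Fin.sum_univ_eq_sum_range (fun k =>
    if (R0.getD k []).idxOf i < (R0.getD k []).idxOf j then w k else 0)]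
  rfl

theorem eta0Pairs_total : ∀ i ∈ List.range' 1 8, ∀ j ∈ List.range' 1 8, i ≠ j →
    (i, j) ∈ eta0Pairs ∨ (j, i) ∈ eta0Pairs := by
  decide

theorem rowsRankingBefore_swap_of_mem_eta0Pairs :
    ∀ p ∈ eta0Pairs, rowsRankingBefore p.2 p.1 = (rowsRankingBefore p.1 p.2)ᶜ := by
  decide

theorem six_le_card_rowsRankingBefore_of_mem_eta0Pairs :
    ∀ p ∈ eta0Pairs, 6 ≤ #(rowsRankingBefore p.1 p.2) := by
  decide

theorem card_toFinset_eta0Pairs : eta0Pairs.toFinset.card = 28 := by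
  decide

theorem sqrt_twentyFour : √24 = 2 * √6 := by
  rw [show (24 : ℝ) = 2 ^ 2 * 6 by norm_num, sqrt_mul (by positivity), sqrt_sq zero_le_two]

theorem chernoff_exponent_le {lam a b : ℝ} (hlam : 0 ≤ lam) (ha : 6 ≤ a) (hab : a + b = 10) :
    lam / 10 * (a * ((√6 / 2)⁻¹ - 1) + b * (√6 / 2 - 1)) ≤ -lam * (1 - √24 / 5) := by
  obtain rfl : b = 10 - a := by linarith
  have h6 : √6 ^ 2 = 6 := sq_sqrt (by norm_num)
  have hpos : 0 < √6 := by positivity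
  rw [inv_div, div_eq_mul_inv 2, show (√6)⁻¹ = √6 / 6 by field_simp; linarith, sqrt_twentyFour]
  nlinarith [mul_nonneg hlam (mul_nonneg hpos.le (sub_nonneg.2 ha))]

theorem twentyEight_mul_exp_le (lam : ℝ) (hlam : 394 ≤ lam) :
    28 * exp (-lam * (1 - √24 / 5)) ≤ 1 / 100 := by
  have hsqrt : √24 ≤ 4.899 := sqrt_le_iff.2 ⟨by norm_num, by norm_num⟩
  have hx : 7.9588 ≤ lam * (1 - √24 / 5) := by nlinarith
  have he8 : 2.718 ^ 8 ≤ exp 8 := by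
    rw [show (8 : ℝ) = (8 : ℕ) * 1 by norm_num, exp_nat_mul]
    exact pow_le_pow_left₀ (by norm_num) (by linarith [exp_one_gt_d9]) 8
  have hexp : 2800 ≤ exp (lam * (1 - √24 / 5)) := by
    calc (2800 : ℝ) ≤ 2.718 ^ 8 * (lam * (1 - √24 / 5) - 8 + 1) := by nlinarith
      _ ≤ exp 8 * exp (lam * (1 - √24 / 5) - 8) :=
        mul_le_mul he8 (add_one_le_exp _) (by linarith) (exp_pos _).le
      _ = exp (lam * (1 - √24 / 5)) := by rw [← exp_add]; ring_nf
  rw [neg_mul, exp_neg, ← div_eq_mul_inv, div_le_div_iff₀ (exp_pos _) (by norm_num)]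
  linarith

theorem exists_mem_eta0Pairs_of_badEvent {w : ℕ → ℕ} (h : BadEvent R0 8 eta0 w) :
    ∃ p ∈ eta0Pairs, wPrefCount R0 w p.1 p.2 ≤ wPrefCount R0 w p.2 p.1 := by
  obtain ⟨i, hi, j, hj, hij, hbad⟩ := h
  by_cases hm : (i, j) ∈ eta0Pairs
  · exact ⟨(i, j), hm, not_lt.1 fun hlt => hbad (iff_of_true hlt (decide_eq_true hm))⟩
  · have hji : ¬ eta0 i j = true := by simpa [eta0] using hm
    exact ⟨(j, i), (eta0Pairs_total i hi j hj hij).resolve_left hm,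
      (not_not.1 fun hlt => hbad (iff_of_false hlt hji)).le⟩

theorem measure_wPrefCount_R0_le_of_mem_eta0Pairs {Ω : Type*} [MeasurableSpace Ω]
    {P : Measure Ω} {lam : ℝ} (hlam : 0 ≤ lam) {W : ℕ → Ω → ℕ} (hmeas : ∀ k, Measurable (W k))
    (hindep : iIndepFun (fun k : Fin 10 => W k.1) P)
    (hpois : ∀ k < 10, ∀ m : ℕ, P {ω | W k ω = m} =
      ENNReal.ofReal (exp (-(lam / 10)) * (lam / 10) ^ m / (Nat.factorial m)))
    {p : ℕ × ℕ} (hp : p ∈ eta0Pairs) :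
    P {ω | wPrefCount R0 (fun k => W k ω) p.1 p.2 ≤ wPrefCount R0 (fun k => W k ω) p.2 p.1}
      ≤ ENNReal.ofReal (exp (-lam * (1 - √24 / 5))) := by
  set S := rowsRankingBefore p.1 p.2
  simp only [wPrefCount_R0, rowsRankingBefore_swap_of_mem_eta0Pairs p hp]
  have ht : 1 ≤ √6 / 2 := by
    rw [le_div_iff₀ two_pos, one_mul]; exact le_sqrt_of_sq_le (by norm_num)
  have hcard : (#S : ℝ) + #Sᶜ = 10 := by
    rw [← Nat.cast_add, card_add_card_compl, Fintype.card_fin]; norm_num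
  refine (measure_sum_le_sum_compl_le_of_poisson (X := fun k : Fin 10 => W k)
    (div_nonneg hlam (by norm_num)) (fun k => hmeas k) hindep (fun k => hpois k k.2) S ht).trans
    ?_
  refine ENNReal.ofReal_le_ofReal (exp_le_exp.2 (chernoff_exponent_le hlam ?_ hcard))
  exact_mod_cast six_le_card_rowsRankingBefore_of_mem_eta0Pairs p hp

open MeasureTheory in
theorem stmt17_general {Ω : Type*} [MeasurableSpace Ω] (P : Measure Ω)
    (lam : ℝ) (hlam : 0 < lam)
    (W : ℕ → Ω → ℕ) (hmeas : ∀ k, Measurable (W k))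
    (hindep : ProbabilityTheory.iIndepFun
      (fun k : Fin 10 => W k.1) P)
    (hpois : ∀ k < 10, ∀ m : ℕ,
      P {ω | W k ω = m} = ENNReal.ofReal
        (Real.exp (-(lam / 10)) * (lam / 10) ^ m / (Nat.factorial m))) :
    P {ω | BadEvent R0 8 eta0 fun k => W k ω}
        ≤ ENNReal.ofReal (28 * Real.exp (-lam * (1 - Real.sqrt 24 / 5))) ∧
    (394 ≤ lam → P {ω | BadEvent R0 8 eta0 fun k => W k ω} ≤ 1/100) := by
  set A : ℕ × ℕ → Set Ω := fun p =>
    {ω | wPrefCount R0 (fun k => W k ω) p.1 p.2 ≤ wPrefCount R0 (fun k => W k ω) p.2 p.1}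
  set B := ENNReal.ofReal (exp (-lam * (1 - √24 / 5)))
  have hbad : P {ω | BadEvent R0 8 eta0 fun k => W k ω} ≤ 28 * B :=
    calc P {ω | BadEvent R0 8 eta0 fun k => W k ω}
        ≤ P (⋃ p ∈ eta0Pairs.toFinset, A p) := measure_mono fun ω hω => by
          obtain ⟨p, hp, hle⟩ := exists_mem_eta0Pairs_of_badEvent hω
          exact Set.mem_biUnion (List.mem_toFinset.2 hp) hle
      _ ≤ ∑ p ∈ eta0Pairs.toFinset, P (A p) := measure_biUnion_finset_le _ _
      _ ≤ ∑ _p ∈ eta0Pairs.toFinset, B := sum_le_sum fun p hp =>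
          measure_wPrefCount_R0_le_of_mem_eta0Pairs hlam.le hmeas hindep hpois
            (List.mem_toFinset.1 hp)
      _ = 28 * B := by rw [sum_const, card_toFinset_eta0Pairs, nsmul_eq_mul]; norm_num
  have h28 : ENNReal.ofReal (28 * exp (-lam * (1 - √24 / 5))) = 28 * B := by
    rw [ENNReal.ofReal_mul (by norm_num), ENNReal.ofReal_ofNat]
  refine ⟨h28 ▸ hbad, fun h394 => hbad.trans ?_⟩
  calc 28 * B = ENNReal.ofReal (28 * exp (-lam * (1 - √24 / 5))) := h28.symm
    _ ≤ ENNReal.ofReal (1 / 100) := ENNReal.ofReal_le_ofReal (twentyEight_mul_exp_le lam h394)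
    _ = 1 / 100 := by rw [ENNReal.ofReal_div_of_pos (by norm_num)]; norm_num

open MeasureTheory in
/-- The example with 8 candidates: with a Poisson number of voters (independent Poisson
counts of mean `λ/10` over the ten rows of `R₀`), the probability that the random
profile generates a pattern different from `η₀` is at most `28·exp(-λ(1 - √24/5))`;
in particular it is at most `1/100` whenever `λ ≥ 394`. -/
theorem stmt17 {Ω : Type*} [MeasurableSpace Ω] (P : Measure Ω) [IsProbabilityMeasure P]
    (lam : ℝ) (hlam : 0 < lam)
    (W : ℕ → Ω → ℕ) (hmeas : ∀ k, Measurable (W k))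
    (hindep : ProbabilityTheory.iIndepFun
      (fun k : Fin 10 => W k.1) P)
    (hpois : ∀ k < 10, ∀ m : ℕ,
      P {ω | W k ω = m} = ENNReal.ofReal
        (Real.exp (-(lam / 10)) * (lam / 10) ^ m / (Nat.factorial m))) :
    P {ω | BadEvent R0 8 eta0 fun k => W k ω}
        ≤ ENNReal.ofReal (28 * Real.exp (-lam * (1 - Real.sqrt 24 / 5))) ∧
    (394 ≤ lam → P {ω | BadEvent R0 8 eta0 fun k => W k ω} ≤ 1/100) :=
  stmt17_general P lam hlam W hmeas hindep hpois
end
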